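/- arXiv:2306.02731 — 7 statements merged into one kernel-verified Lean document; each statement's English description precedes it below -/
import Mathlib

section
/- Let A : ℝ → Matrix n n ℝ be continuous and let Y : ℝ → Matrix n n ℝ be differentiable with Y'(t) = A(t) * Y(t) for all t ∈ [0, T] and Y(0) = 1 (the identity matrix). Then for every t ∈ [0, T], det (Y(t)) = exp( ∫₀ᵗ trace (A(s)) ds ). -/
open Set MeasureTheory

attribute [local instance] Matrix.normedAddCommGroup Matrix.normedSpace

/-- The determinant as a continuous multilinear map in the rows. -/
noncomputable def detCMM (n : ℕ) :
    ContinuousMultilinearMap ℝ (fun _ : Fin n => (Fin n → ℝ)) ℝ :=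
  { toMultilinearMap :=
      (Matrix.detRowAlternating : (Fin n → ℝ) [⋀^Fin n]→ₗ[ℝ] ℝ).toMultilinearMap
    cont := by
      have : Continuous fun M : Matrix (Fin n) (Fin n) ℝ => M.det :=
        continuous_id.matrix_det
      exact this }

/-- The `i`-th row as a continuous linear map. -/
def rowCLM (n : ℕ) (i : Fin n) :
    Matrix (Fin n) (Fin n) ℝ →L[ℝ] (Fin n → ℝ) :=
  { toFun := fun M => M i
    map_add' := fun _ _ => rfl
    map_smul' := fun _ _ => rfl
    cont := continuous_apply i }

/-- Jacobi-type derivative of the determinant along a differentiable matrix path. -/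
lemma det_hasDerivAt {n : ℕ} {Y : ℝ → Matrix (Fin n) (Fin n) ℝ} {t : ℝ}
    {M : Matrix (Fin n) (Fin n) ℝ} (h : HasDerivAt Y M t) :
    HasDerivAt (fun s => (Y s).det)
      (∑ i, ((Y t).updateRow i (M i)).det) t := by
  classical
  have hrow : ∀ i : Fin n, HasDerivAt (fun s => Y s i) (M i) t := by
    intro i
    have := ((rowCLM n i).hasFDerivAt (x := Y t)).comp t h.hasFDerivAt
    have := this.hasDerivAt
    refine this.congr_deriv ?_
    change (1:ℝ) • M i = M i
    rw [one_smul]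
  have hfd :
      HasFDerivAt (fun s => (detCMM n) (fun i => Y s i))
        ((∑ i : Fin n,
          ((detCMM n).toContinuousLinearMap (fun j => Y t j) i) ∘L
            ((1 : ℝ →L[ℝ] ℝ).smulRight (M i)))) t :=
    HasFDerivAt.multilinear_comp (detCMM n) (fun i => (hrow i).hasFDerivAt)
  have hd := hfd.hasDerivAt
  have key : (∑ i : Fin n,
      ((detCMM n).toContinuousLinearMap (fun j => Y t j) i) ∘L
        ((1 : ℝ →L[ℝ] ℝ).smulRight (M i))) 1
      = ∑ i, ((Y t).updateRow i (M i)).det := by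
    rw [ContinuousLinearMap.sum_apply]
    refine Finset.sum_congr rfl fun i _ => ?_
    simp only [ContinuousLinearMap.comp_apply, ContinuousLinearMap.smulRight_apply,
      ContinuousLinearMap.one_apply, one_smul,
      ContinuousMultilinearMap.toContinuousLinearMap]
    rfl
  rw [key] at hd
  exact hd

/-- **Liouville's formula.**  If `Y' t = A t * Y t` on `[0, T]` with `Y 0 = 1`, where
`A` is continuous, then `det (Y t) = exp (∫₀ᵗ trace (A s) ds)` for all `t ∈ [0, T]`. -/
theorem liouville_formula_det_fundamental_solution
    (n : ℕ) (T : ℝ) (hT : 0 ≤ T)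
    (A : ℝ → Matrix (Fin n) (Fin n) ℝ) (hA : Continuous A)
    (Y : ℝ → Matrix (Fin n) (Fin n) ℝ) (hYdiff : Differentiable ℝ Y)
    (hYode : ∀ t ∈ Icc (0 : ℝ) T, HasDerivAt Y (A t * Y t) t)
    (hY0 : Y 0 = 1) :
    ∀ t ∈ Icc (0 : ℝ) T,
      (Y t).det = Real.exp (∫ s in (0 : ℝ)..t, (A s).trace) := by
  classical
  set F : ℝ → ℝ := fun t => ∫ s in (0 : ℝ)..t, (A s).trace with hF
  have htrace : Continuous fun s => (A s).trace := hA.matrix_trace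
  have hFderiv : ∀ t : ℝ, HasDerivAt F ((A t).trace) t := fun t =>
    (htrace.integral_hasStrictDerivAt 0 t).hasDerivAt
  -- the derivative of det ∘ Y on [0, T]
  have hdet : ∀ t ∈ Icc (0 : ℝ) T,
      HasDerivAt (fun s => (Y s).det) ((A t).trace * (Y t).det) t := by
    intro t ht
    have h := det_hasDerivAt (hYode t ht)
    have key : (∑ i, ((Y t).updateRow i ((A t * Y t) i)).det)
        = (A t).trace * (Y t).det := by
      have hrow : ∀ i : Fin n, (A t * Y t) i = ∑ k, A t i k • Y t k := by
        intro i
        funext j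
        simp [Matrix.mul_apply, Finset.sum_apply]
      calc (∑ i, ((Y t).updateRow i ((A t * Y t) i)).det)
          = ∑ i, A t i i • (Y t).det := by
            refine Finset.sum_congr rfl fun i _ => ?_
            rw [hrow i, Matrix.det_updateRow_sum]
        _ = (A t).trace * (Y t).det := by
            rw [Matrix.trace, Finset.sum_mul]
            simp [Matrix.diag, smul_eq_mul]
    rwa [key] at h
  -- the auxiliary function g = det (Y t) * exp (-F t) is constant on [0, T]
  set g : ℝ → ℝ := fun t => (Y t).det * Real.exp (-F t) with hg
  have hgderiv : ∀ t ∈ Icc (0 : ℝ) T, HasDerivAt g 0 t := by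
    intro t ht
    have h1 := hdet t ht
    have h2 : HasDerivAt (fun s => Real.exp (-F s))
        (-(A t).trace * Real.exp (-F t)) t := by
      have := ((hFderiv t).neg).exp
      simpa [mul_comm] using this
    have := h1.mul h2
    exact this.congr_deriv (by ring)
  have hgcont : ContinuousOn g (Icc 0 T) := by
    have hdetc : Continuous fun s => (Y s).det := by
      have : Continuous fun s : ℝ => Y s := hYdiff.continuous
      exact this.matrix_det
    have hFd : Differentiable ℝ F := fun t => (hFderiv t).differentiableAt
    have hFc : Continuous F := hFd.continuous
    exact (hdetc.mul ((hFc.neg).rexp)).continuousOn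
  have hconst : ∀ t ∈ Icc (0 : ℝ) T, g t = g 0 := by
    refine constant_of_has_deriv_right_zero hgcont fun t ht => ?_
    exact (hgderiv t ⟨ht.1, le_of_lt ht.2⟩).hasDerivWithinAt
  intro t ht
  have h0 : g 0 = 1 := by
    simp [hg, hY0, hF, Matrix.det_one]
  have h := (hconst t ht).trans h0
  have hexp : Real.exp (-F t) = (Real.exp (F t))⁻¹ := Real.exp_neg _
  rw [hg] at h
  simp only [hexp] at h
  field_simp at h
  simpa [hF] using h
end

section
/- Let n ≥ 1, let f : ℝⁿ × ℝ → ℝⁿ be continuously differentiable, and let φ : ℝⁿ × ℝ → ℝⁿ satisfy φ(x, 0) = x and ∂φ/∂t (x, t) = f(φ(x, t), t) for all t ∈ [0, T], with φ continuously differentiable jointly in (x, t) and x ↦ φ(x, T) a bijection of ℝⁿ. Let μ₀ be a probability measure on ℝⁿ with density p₀ with respect to Lebesgue measure, and let μ_T be the pushforward of μ₀ under x ↦ φ(x, T). Then μ_T has a density p_T with respect to Lebesgue measure satisfying, for μ₀-almost every z₀, p₀(z₀) = p_T(φ(z₀, T)) · exp( ∫₀ᵀ trace ( (D_z f)(φ(z₀,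 t), t) ) dt ). -/
open Set MeasureTheory intervalIntegral

/-- The determinant, as a continuous multilinear map in the rows. -/
noncomputable def detCM (n : ℕ) : ContinuousMultilinearMap ℝ (fun _ : Fin n => (Fin n → ℝ)) ℝ :=
  { (Matrix.detRowAlternating : AlternatingMap ℝ (Fin n → ℝ) ℝ (Fin n)).toMultilinearMap with
    cont := by
      show Continuous fun v : Fin n → Fin n → ℝ => Matrix.det (Matrix.of v)
      exact Continuous.matrix_det (continuous_pi fun i => continuous_pi fun j =>
        (continuous_apply j).comp (continuous_apply i)) }

lemma detCM_apply {n : ℕ} (v : Fin n → Fin n → ℝ) : detCM n v = Matrix.det (Matrix.of v) := rfl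

lemma single_eq_ite {n : ℕ} (j : Fin n) :
    (Pi.single j 1 : Fin n → ℝ) = fun j' => if j' = j then 1 else 0 := by
  funext j'; simp [Pi.single_apply]

lemma sum_det_updateRow_mul {n : ℕ} (M B : Matrix (Fin n) (Fin n) ℝ) :
    ∑ i, (M.updateRow i ((B * M) i)).det = B.trace * M.det := by
  have h : ∀ i : Fin n, (M.updateRow i ((B * M) i)).det = B i i * M.det := by
    intro i
    have hrow : (B * M) i = ∑ k, B i k • M k := by
      funext j; simp [Matrix.mul_apply, Finset.sum_apply]
    rw [hrow, Matrix.det_updateRow_sum]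
    simp [smul_eq_mul]
  simp only [h, Matrix.trace, Matrix.diag, Finset.sum_mul]

/-- **Instantaneous change of variables for densities.**  Let `φ` be a `C¹` flow of the
ODE `z' = f(z, t)` on `ℝⁿ` whose time-`T` map is a bijection, let `μ₀` be a probability
measure with density `p₀` with respect to Lebesgue measure, and let `μ_T` be the
pushforward of `μ₀` under `x ↦ φ (x, T)`.  Then `μ_T` has a density `p_T` satisfying
`p₀ z₀ = p_T (φ (z₀, T)) * exp (∫₀ᵀ trace ((D_z f)(φ (z₀, t), t)) dt)` for
`μ₀`-almost every `z₀`. -/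
theorem instantaneous_change_of_variables_density
    (n : ℕ) (hn : 1 ≤ n) (T : ℝ) (hT : 0 ≤ T)
    (f : (Fin n → ℝ) × ℝ → (Fin n → ℝ)) (hf : ContDiff ℝ 1 f)
    (φ : (Fin n → ℝ) × ℝ → (Fin n → ℝ)) (hφ : ContDiff ℝ 1 φ)
    (hφ0 : ∀ x, φ (x, 0) = x)
    (hφode : ∀ x, ∀ t ∈ Icc (0 : ℝ) T,
      HasDerivAt (fun s => φ (x, s)) (f (φ (x, t), t)) t)
    (hbij : Function.Bijective (fun x => φ (x, T)))
    (μ₀ : Measure (Fin n → ℝ)) [IsProbabilityMeasure μ₀]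
    (p₀ : (Fin n → ℝ) → ℝ)
    (hμ₀ : μ₀ = volume.withDensity (fun x => ENNReal.ofReal (p₀ x))) :
    ∃ p_T : (Fin n → ℝ) → ℝ,
      Measure.map (fun x => φ (x, T)) μ₀
          = volume.withDensity (fun x => ENNReal.ofReal (p_T x)) ∧
        ∀ᵐ z₀ ∂μ₀,
          p₀ z₀ = p_T (φ (z₀, T)) *
            Real.exp (∫ t in (0 : ℝ)..T,
              LinearMap.trace ℝ (Fin n → ℝ)
                ((fderiv ℝ (fun w => f (w, t)) (φ (z₀, t)) :
                  (Fin n → ℝ) →ₗ[ℝ] (Fin n → ℝ)))) := by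
  classical
  have hφd : Differentiable ℝ φ := hφ.differentiable one_ne_zero
  have hfd : Differentiable ℝ f := hf.differentiable one_ne_zero
  -- inclusion w ↦ (w, t) has constant derivative c
  set c : (Fin n → ℝ) →L[ℝ] (Fin n → ℝ) × ℝ := (ContinuousLinearMap.id ℝ (Fin n → ℝ)).prod 0 with hc
  have hι : ∀ (x : (Fin n → ℝ)) (t : ℝ), HasFDerivAt (fun w : (Fin n → ℝ) => (w, t)) c x := fun x t =>
    (hasFDerivAt_id x).prodMk (hasFDerivAt_const t x)
  -- the space derivatives of φ and f
  set J : (Fin n → ℝ) → ℝ → ((Fin n → ℝ) →L[ℝ] (Fin n → ℝ)) := fun x t => (fderiv ℝ φ (x, t)).comp c with hJdef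
  set A : (Fin n → ℝ) → ℝ → ((Fin n → ℝ) →L[ℝ] (Fin n → ℝ)) := fun y t => (fderiv ℝ f (y, t)).comp c with hAdef
  have hJ : ∀ x t, HasFDerivAt (fun w => φ (w, t)) (J x t) x := fun x t => by
    exact ((hφd (x, t)).hasFDerivAt).comp x (hι x t)
  have hA : ∀ y t, HasFDerivAt (fun w => f (w, t)) (A y t) y := fun y t => by
    exact ((hfd (y, t)).hasFDerivAt).comp y (hι y t)
  have hJc : Continuous (fun p : (Fin n → ℝ) × ℝ => J p.1 p.2) := by
    exact (hφ.continuous_fderiv one_ne_zero).clm_comp continuous_const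
  have hAc : Continuous (fun p : (Fin n → ℝ) × ℝ => A p.1 p.2) := by
    exact (hf.continuous_fderiv one_ne_zero).clm_comp continuous_const
  -- trace as a continuous map on CLMs
  set trL : ((Fin n → ℝ) →L[ℝ] (Fin n → ℝ)) →ₗ[ℝ] ℝ :=
    (LinearMap.trace ℝ (Fin n → ℝ)).comp (ContinuousLinearMap.coeLM ℝ) with htrLdef
  have htrLc : Continuous trL := LinearMap.continuous_of_finiteDimensional trL
  set τ : (Fin n → ℝ) → ℝ → ℝ := fun z t => trL (A (φ (z, t)) t) with hτdef
  have hφx : ∀ x : (Fin n → ℝ), Continuous fun s : ℝ => φ (x, s) := fun x => by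
    exact hφ.continuous.comp (Continuous.prodMk_right x)
  -- integral equation for the space derivative (variational equation, integral form)
  have key : ∀ (x : (Fin n → ℝ)), ∀ t ∈ Icc (0 : ℝ) T,
      J x t = ContinuousLinearMap.id ℝ (Fin n → ℝ)
        + ∫ s in (0 : ℝ)..t, (A (φ (x, s)) s).comp (J x s) := by
    intro x₀ t ht
    have hsub : Icc (0 : ℝ) t ⊆ Icc 0 T := Icc_subset_Icc le_rfl ht.2
    have huIcc : uIcc (0 : ℝ) t = Icc 0 t := uIcc_of_le ht.1
    have hFc : ∀ x : (Fin n → ℝ), Continuous fun s : ℝ => f (φ (x, s), s) := fun x => by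
      exact hf.continuous.comp ((hφx x).prodMk continuous_id)
    have hFTC : ∀ x : (Fin n → ℝ), φ (x, t) = x + ∫ s in (0 : ℝ)..t, f (φ (x, s), s) := by
      intro x
      have h1 : ∀ s ∈ uIcc (0 : ℝ) t, HasDerivAt (fun s => φ (x, s)) (f (φ (x, s), s)) s := by
        rw [huIcc]; exact fun s hs => hφode x s (hsub hs)
      have h2 := intervalIntegral.integral_eq_sub_of_hasDerivAt h1
        ((hFc x).intervalIntegrable 0 t)
      rw [h2, hφ0 x]; abel
    set F' : (Fin n → ℝ) → ℝ → ((Fin n → ℝ) →L[ℝ] (Fin n → ℝ)) := fun x s => (A (φ (x, s)) s).comp (J x s) with hF'def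
    have hF'c : Continuous fun p : (Fin n → ℝ) × ℝ => F' p.1 p.2 := by
      have h1 : Continuous fun p : (Fin n → ℝ) × ℝ => (φ p, p.2) := (hφ.continuous).prodMk continuous_snd
      exact Continuous.clm_comp (by exact hAc.comp h1) hJc
    obtain ⟨C, hC⟩ := ((isCompact_closedBall x₀ 1).prod isCompact_uIcc).exists_bound_of_continuousOn
      (s := Metric.closedBall x₀ 1 ×ˢ uIcc (0 : ℝ) t) hF'c.continuousOn
    have hG : HasFDerivAt (fun x => ∫ s in (0 : ℝ)..t, f (φ (x, s), s))
        (∫ s in (0 : ℝ)..t, F' x₀ s) x₀ := by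
      refine intervalIntegral.hasFDerivAt_integral_of_dominated_of_fderiv_le
        (bound := fun _ => C) (Metric.ball_mem_nhds x₀ one_pos)
        (Filter.Eventually.of_forall fun x => (hFc x).aestronglyMeasurable)
        ((hFc x₀).intervalIntegrable 0 t)
        ((hF'c.comp (Continuous.prodMk_right x₀)).aestronglyMeasurable)
        (ae_of_all _ fun s hs x hx => hC (x, s)
          ⟨Metric.ball_subset_closedBall hx, uIoc_subset_uIcc hs⟩)
        intervalIntegrable_const
        (ae_of_all _ fun s _ x _ => by exact (hA (φ (x, s)) s).comp x (hJ x s))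
    have h2 : HasFDerivAt (fun x => φ (x, t))
        (ContinuousLinearMap.id ℝ (Fin n → ℝ) + ∫ s in (0 : ℝ)..t, F' x₀ s) x₀ := by
      have h3 := (hasFDerivAt_id x₀).add hG
      have h4 : (fun x : (Fin n → ℝ) => x + ∫ s in (0 : ℝ)..t, f (φ (x, s), s)) = fun x => φ (x, t) :=
        funext fun x => (hFTC x).symm
      change HasFDerivAt (fun x : (Fin n → ℝ) => x + ∫ s in (0 : ℝ)..t, f (φ (x, s), s)) _ x₀ at h3
      rwa [h4] at h3
    exact (hJ x₀ t).unique h2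
  -- Liouville's formula
  have liouville : ∀ z : (Fin n → ℝ), (J z T).det = Real.exp (∫ t in (0 : ℝ)..T, τ z t) := by
    intro z
    set G : ℝ → ((Fin n → ℝ) →L[ℝ] (Fin n → ℝ)) := fun s => (A (φ (z, s)) s).comp (J z s) with hGdef
    have hGc : Continuous G := by
      have h1 : Continuous fun s : ℝ => (φ (z, s), s) := (hφx z).prodMk continuous_id
      exact Continuous.clm_comp (by exact hAc.comp h1)
        (by exact hJc.comp (Continuous.prodMk_right z))
    set K : ℝ → ((Fin n → ℝ) →L[ℝ] (Fin n → ℝ)) :=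
      fun r => ContinuousLinearMap.id ℝ (Fin n → ℝ) + ∫ s in (0 : ℝ)..r, G s with hKdef
    have hKI : ∀ r ∈ Icc (0 : ℝ) T, K r = J z r := fun r hr => (key z r hr).symm
    have hK' : ∀ r, HasDerivAt K (G r) r := by
      intro r
      have := (intervalIntegral.integral_hasDerivAt_right
        (hGc.intervalIntegrable 0 r)
        (hGc.stronglyMeasurable.stronglyMeasurableAtFilter)
        hGc.continuousAt)
      exact this.const_add (ContinuousLinearMap.id ℝ (Fin n → ℝ))
    have hKc : Continuous K := continuous_iff_continuousAt.2 fun r => (hK' r).continuousAt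
    set row : Fin n → (((Fin n → ℝ) →L[ℝ] (Fin n → ℝ)) →L[ℝ] (Fin n → ℝ)) := fun i =>
      LinearMap.toContinuousLinearMap
        { toFun := fun L => fun j => L (Pi.single j 1) i,
          map_add' := by intros; funext j; simp,
          map_smul' := by intros; funext j; simp } with hrowdef
    have hrow_apply : ∀ i (L : (Fin n → ℝ) →L[ℝ] (Fin n → ℝ)), row i L = fun j => L (Pi.single j 1) i :=
      fun i L => rfl
    have hmat : ∀ L : (Fin n → ℝ) →L[ℝ] (Fin n → ℝ),
        (fun i => row i L) = fun i j => LinearMap.toMatrix' (L : (Fin n → ℝ) →ₗ[ℝ] (Fin n → ℝ)) i j := by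
      intro L
      funext i j
      simp only [hrow_apply]
      rw [LinearMap.toMatrix'_apply, single_eq_ite]
      rfl
    set h : ℝ → ℝ := fun r => detCM n (fun i => row i (K r)) with hhdef
    have hdet : ∀ r, h r = (K r).det := by
      intro r
      rw [hhdef]
      show detCM n (fun i => row i (K r)) = _
      rw [hmat, detCM_apply]
      have : Matrix.of (fun i j => LinearMap.toMatrix' ((K r : (Fin n → ℝ) →ₗ[ℝ] (Fin n → ℝ))) i j)
          = LinearMap.toMatrix' ((K r : (Fin n → ℝ) →ₗ[ℝ] (Fin n → ℝ))) := rfl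
      rw [this, LinearMap.det_toMatrix']
    have hh' : ∀ r, HasDerivAt h
        (∑ i, detCM n (Function.update (fun j => row j (K r)) i (row i (G r)))) r := by
      intro r
      have hrowd : ∀ i, HasFDerivAt (fun u => row i (K u))
          ((1 : ℝ →L[ℝ] ℝ).smulRight (row i (G r))) r :=
        fun i => (((row i).hasFDerivAt).comp_hasDerivAt r (hK' r)).hasFDerivAt
      have hm := HasFDerivAt.multilinear_comp (detCM n) hrowd
      have := hm.hasDerivAt
      convert this using 1
      · rfl
      · rfl
      simp only [ContinuousLinearMap.coe_sum', Finset.sum_apply,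
        ContinuousLinearMap.coe_comp', Function.comp_apply,
        ContinuousLinearMap.smulRight_apply, ContinuousLinearMap.one_apply, one_smul,
        ContinuousMultilinearMap.toContinuousLinearMap_apply]
    -- on [0, T], rewrite derivative as τ z r * h r
    have hdh : ∀ r ∈ Icc (0 : ℝ) T, HasDerivAt h (τ z r * h r) r := by
      intro r hr
      have h1 := hh' r
      have hGr : G r = (A (φ (z, r)) r).comp (K r) := by rw [hGdef]; rw [hKI r hr]
      have heq : (∑ i, detCM n (Function.update (fun j => row j (K r)) i (row i (G r))))
          = τ z r * h r := by
        set M : Matrix (Fin n) (Fin n) ℝ := LinearMap.toMatrix' ((K r : (Fin n → ℝ) →ₗ[ℝ] (Fin n → ℝ))) with hM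
        set B : Matrix (Fin n) (Fin n) ℝ :=
          LinearMap.toMatrix' ((A (φ (z, r)) r : (Fin n → ℝ) →ₗ[ℝ] (Fin n → ℝ))) with hB
        have hGrow : ∀ i, row i (G r) = (B * M) i := by
          intro i
          rw [hGr]
          funext j
          rw [hrow_apply]
          have : ((A (φ (z, r)) r).comp (K r) : (Fin n → ℝ) →ₗ[ℝ] (Fin n → ℝ))
              = (A (φ (z, r)) r : (Fin n → ℝ) →ₗ[ℝ] (Fin n → ℝ)).comp (K r : (Fin n → ℝ) →ₗ[ℝ] (Fin n → ℝ)) := rfl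
          calc ((A (φ (z, r)) r).comp (K r)) (Pi.single j 1) i
              = LinearMap.toMatrix' (((A (φ (z, r)) r).comp (K r) : (Fin n → ℝ) →ₗ[ℝ] (Fin n → ℝ))) i j := by
                rw [LinearMap.toMatrix'_apply, single_eq_ite]
                try rfl
            _ = (B * M) i j := by rw [this, LinearMap.toMatrix'_comp]
        have hrows : (fun j => row j (K r)) = fun i j => M i j := by rw [hmat]
        have hupd : ∀ i, detCM n (Function.update (fun j => row j (K r)) i (row i (G r)))
            = (M.updateRow i ((B * M) i)).det := by
          intro i
          rw [hrows, hGrow, detCM_apply]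
          congr 1
        rw [Finset.sum_congr rfl fun i _ => hupd i, sum_det_updateRow_mul]
        have e1 : B.trace = τ z r := by
          rw [hτdef]
          show B.trace = trL (A (φ (z, r)) r)
          rw [htrLdef]
          show B.trace
            = LinearMap.trace ℝ (Fin n → ℝ) ((A (φ (z, r)) r : (Fin n → ℝ) →ₗ[ℝ] (Fin n → ℝ)))
          rw [LinearMap.trace_eq_matrix_trace ℝ (Pi.basisFun ℝ (Fin n)),
            LinearMap.toMatrix_eq_toMatrix']
        have e2 : M.det = h r := by
          rw [hdet, hM]
          try rw [LinearMap.det_toMatrix']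
        rw [e1, e2]
      rwa [heq] at h1
    -- the scalar integrating factor
    have hτc : Continuous (τ z) := by
      have h1 : Continuous fun s : ℝ => (φ (z, s), s) := (hφx z).prodMk continuous_id
      exact htrLc.comp (by exact hAc.comp h1 : Continuous fun s : ℝ => A (φ (z, s)) s)
    set I : ℝ → ℝ := fun r => ∫ s in (0 : ℝ)..r, τ z s with hIdef
    have hI' : ∀ r, HasDerivAt I (τ z r) r := fun r =>
      intervalIntegral.integral_hasDerivAt_right (hτc.intervalIntegrable 0 r)
        (hτc.stronglyMeasurable.stronglyMeasurableAtFilter) hτc.continuousAt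
    have hIc : Continuous I := continuous_iff_continuousAt.2 fun r => (hI' r).continuousAt
    set u : ℝ → ℝ := fun r => h r * Real.exp (-I r) with hudef
    have hu' : ∀ r ∈ Icc (0 : ℝ) T, HasDerivAt u 0 r := by
      intro r hr
      have h2 : HasDerivAt (fun w => Real.exp (-I w)) (Real.exp (-I r) * (-τ z r)) r :=
        ((hI' r).neg).exp
      have h3 := (hdh r hr).mul h2
      convert h3 using 1
      · rfl
      · rfl
      · rfl
      ring
    have hhc : Continuous h := by
      have : Continuous fun r => (K r).det := ContinuousLinearMap.continuous_det.comp hKc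
      have h4 : h = fun r => (K r).det := funext hdet
      rw [h4]; exact this
    have huc : Continuous u := hhc.mul ((hIc.neg).rexp)
    have hconst := constant_of_has_deriv_right_zero (huc.continuousOn (s := Icc (0:ℝ) T))
      (fun r hr => ((hu' r (Ico_subset_Icc_self hr)).hasDerivWithinAt))
    have hu0 : u 0 = 1 := by
      have hI0 : I 0 = 0 := intervalIntegral.integral_same
      have hK0 : K 0 = ContinuousLinearMap.id ℝ (Fin n → ℝ) := by
        rw [hKdef]; simp
      have hh0 : h 0 = 1 := by
        rw [hdet, hK0]
        simp [ContinuousLinearMap.det, ContinuousLinearMap.coe_id, LinearMap.det_id]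
      rw [hudef]
      simp [hh0, hI0]
    have huT := hconst T ⟨hT, le_rfl⟩
    rw [hu0] at huT
    have hhT : h T = Real.exp (I T) := by
      have hne : Real.exp (-I T) ≠ 0 := Real.exp_ne_zero _
      have : h T * Real.exp (-I T) = 1 := huT
      field_simp [Real.exp_neg] at this
      rwa [Real.exp_neg, ← div_eq_mul_inv, div_eq_one_iff_eq (Real.exp_pos _).ne'] at this
    rw [← hKI T ⟨hT, le_rfl⟩, ← hdet T, hhT]
  -- now the measure-theoretic part
  set g : (Fin n → ℝ) → (Fin n → ℝ) := fun x => φ (x, T) with hgdef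
  have hg : ∀ x, HasFDerivAt g (J x T) x := fun x => hJ x T
  have hgc : Continuous g := by
    exact hφ.continuous.comp (continuous_id.prodMk continuous_const)
  have hgm : Measurable g := hgc.measurable
  set e : (Fin n → ℝ) ≃ (Fin n → ℝ) := Equiv.ofBijective g hbij with hedef
  set D : (Fin n → ℝ) → ℝ := fun z => Real.exp (∫ t in (0 : ℝ)..T, τ z t) with hDdef
  have hDpos : ∀ z, 0 < D z := fun z => Real.exp_pos _
  set pT : (Fin n → ℝ) → ℝ := fun y => p₀ (e.symm y) / D (e.symm y) with hpTdef
  have hesymm : ∀ x : (Fin n → ℝ), e.symm (g x) = x := fun x => e.symm_apply_apply x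
  have hpTg : ∀ x : (Fin n → ℝ), pT (g x) = p₀ x / D x := by
    intro x
    rw [hpTdef]
    simp only [hesymm x]
  refine ⟨pT, ?_, ?_⟩
  · -- pushforward equality
    ext S hS
    rw [Measure.map_apply hgm hS, hμ₀, withDensity_apply _ (hgm hS), withDensity_apply _ hS]
    have himg : g '' (g ⁻¹' S) = S := Set.image_preimage_eq S hbij.surjective
    have hcv := lintegral_image_eq_lintegral_abs_det_fderiv_mul volume (hgm hS)
      (fun x _ => (hg x).hasFDerivWithinAt) (hbij.injective.injOn)
      (fun y => ENNReal.ofReal (pT y))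
    rw [himg] at hcv
    rw [hcv]
    refine lintegral_congr fun x => ?_
    rw [hpTg x]
    have habs : |(J x T).det| = D x := by
      rw [liouville x]; exact abs_of_pos (Real.exp_pos _)
    rw [habs, ← ENNReal.ofReal_mul (le_of_lt (hDpos x))]
    congr 1
    field_simp
    exact (mul_div_cancel_right₀ _ (hDpos x).ne').symm
  · -- pointwise identity
    refine ae_of_all _ fun z₀ => ?_
    have hint : (∫ t in (0 : ℝ)..T,
        LinearMap.trace ℝ (Fin n → ℝ) ((fderiv ℝ (fun w => f (w, t)) (φ (z₀, t)) : (Fin n → ℝ) →ₗ[ℝ] (Fin n → ℝ))))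
        = ∫ t in (0 : ℝ)..T, τ z₀ t := by
      refine intervalIntegral.integral_congr fun t _ => ?_
      rw [(hA (φ (z₀, t)) t).fderiv]
      rfl
    rw [hint]
    show p₀ z₀ = pT (g z₀) * D z₀
    rw [hpTg z₀]
    field_simp
    exact (mul_div_cancel_right₀ _ (hDpos z₀).ne').symm
end

section
/- Let n, m ≥ 1, let f : ℝⁿ × ℝᵐ × ℝ → ℝⁿ and g : ℝᵐ → ℝᵐ be such that the joint vector field h((z, w), t) = (f(z, w, t), g(w)) is continuous in t and Lipschitz continuous in (z, w) uniformly in t ∈ [0, T]. Fix an initial augmented value w₀ ∈ ℝᵐ. For each z₀ ∈ ℝⁿ, let (z(·; z₀), w(·; z₀)) : [0, T] → ℝⁿ × ℝᵐ be the unique solution of the ODE (z, w)' = h((z, w), t) with initial condition (z₀, w₀). Then the map z₀ ↦ z(T; z₀) from ℝⁿ to ℝⁿ is injective. -/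
open Set

/-- **Injectivity of the AFFJORD transformation.**  Let
`h ((z, w), t) = (f (z, w, t), g w)` be an augmented vector field on `ℝⁿ × ℝᵐ` which is
continuous in `t` and Lipschitz in `(z, w)` uniformly in `t ∈ [0, T]`, where the
augmented component `w` evolves autonomously.  If every data point `z₀` is augmented
with the same vector `w₀` and `(z (·; z₀), w (·; z₀))` denotes the solution of the
joint ODE starting at `(z₀, w₀)`, then `z₀ ↦ z (T; z₀)` is injective. -/
theorem affjord_injective
    (n m : ℕ) (hn : 1 ≤ n) (hm : 1 ≤ m) (T : ℝ) (hT : 0 ≤ T)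
    (f : (Fin n → ℝ) × (Fin m → ℝ) × ℝ → (Fin n → ℝ))
    (g : (Fin m → ℝ) → (Fin m → ℝ))
    (h : ((Fin n → ℝ) × (Fin m → ℝ)) → ℝ → ((Fin n → ℝ) × (Fin m → ℝ)))
    (hdef : ∀ p t, h p t = (f (p.1, p.2, t), g p.2))
    (hcont : ∀ p, Continuous fun t => h p t)
    (hlip : ∃ K : NNReal, ∀ t ∈ Icc (0 : ℝ) T, LipschitzWith K fun p => h p t)
    (w₀ : Fin m → ℝ)
    (sol : (Fin n → ℝ) → ℝ → ((Fin n → ℝ) × (Fin m → ℝ)))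
    (hsol0 : ∀ z₀, sol z₀ 0 = (z₀, w₀))
    (hsolode : ∀ z₀, ∀ t ∈ Icc (0 : ℝ) T, HasDerivAt (sol z₀) (h (sol z₀ t) t) t) :
    Function.Injective fun z₀ => (sol z₀ T).1 := by
  obtain ⟨K, hK⟩ := hlip
  intro z₁ z₂ heq
  simp only at heq
  -- the clamped vector field, Lipschitz for all t
  set v : ℝ → ((Fin n → ℝ) × (Fin m → ℝ)) → ((Fin n → ℝ) × (Fin m → ℝ)) :=
    fun t p => h p (min T (max 0 t)) with hv
  have hclamp : ∀ t ∈ Icc (0 : ℝ) T, min T (max 0 t) = t := by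
    intro t ht
    rw [max_eq_right ht.1, min_eq_right ht.2]
  have hclampmem : ∀ t : ℝ, min T (max 0 t) ∈ Icc (0 : ℝ) T := by
    intro t
    constructor
    · exact le_min hT (le_max_left 0 t)
    · exact min_le_left _ _
  have hvlip : ∀ t, LipschitzWith K (v t) := fun t => hK _ (hclampmem t)
  -- g is Lipschitz
  have hglip : LipschitzWith K g := by
    intro w₁ w₂
    have h0 : (0 : ℝ) ∈ Icc (0 : ℝ) T := ⟨le_refl 0, hT⟩
    have := hK 0 h0 ((0 : Fin n → ℝ), w₁) ((0 : Fin n → ℝ), w₂)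
    simp only [hdef] at this
    calc edist (g w₁) (g w₂)
        ≤ edist ((f ((0 : Fin n → ℝ), w₁, 0), g w₁) : (Fin n → ℝ) × (Fin m → ℝ))
            (f ((0 : Fin n → ℝ), w₂, 0), g w₂) := le_max_right _ _
      _ ≤ K * edist (((0 : Fin n → ℝ), w₁) : (Fin n → ℝ) × (Fin m → ℝ)) ((0 : Fin n → ℝ), w₂) :=
          this
      _ = K * edist w₁ w₂ := by
          rw [Prod.edist_eq]
          simp
  -- the second components both solve w' = g w with the same initial condition
  have hw : ∀ z₀, ∀ t ∈ Icc (0 : ℝ) T, HasDerivAt (fun s => (sol z₀ s).2) (g (sol z₀ t).2) t := by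
    intro z₀ t ht
    have hd := ((hsolode z₀ t ht).hasFDerivAt.snd).hasDerivAt
    simpa [hdef] using hd
  have hwcont : ∀ z₀, ContinuousOn (fun s => (sol z₀ s).2) (Icc (0 : ℝ) T) := fun z₀ =>
    fun t ht => ((hw z₀ t ht).continuousAt).continuousWithinAt
  have hweq : EqOn (fun s => (sol z₁ s).2) (fun s => (sol z₂ s).2) (Icc (0 : ℝ) T) := by
    apply ODE_solution_unique (v := fun _ w => g w) (fun _ => hglip) (hwcont z₁)
      (fun t ht => (hw z₁ t (Ico_subset_Icc_self ht)).hasDerivWithinAt) (hwcont z₂)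
      (fun t ht => (hw z₂ t (Ico_subset_Icc_self ht)).hasDerivWithinAt)
    simp [hsol0]
  -- so the full solutions agree at time T
  have hTmem : T ∈ Icc (0 : ℝ) T := ⟨hT, le_refl T⟩
  have hfullT : sol z₁ T = sol z₂ T := Prod.ext heq (hweq hTmem)
  -- backward uniqueness for the full ODE
  have hcontsol : ∀ z₀, ContinuousOn (sol z₀) (Icc (0 : ℝ) T) := fun z₀ t ht =>
    ((hsolode z₀ t ht).continuousAt).continuousWithinAt
  have hderiv : ∀ z₀, ∀ t ∈ Ioc (0 : ℝ) T,
      HasDerivWithinAt (sol z₀) (v t (sol z₀ t)) (Iic t) t := by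
    intro z₀ t ht
    have ht' : t ∈ Icc (0 : ℝ) T := Ioc_subset_Icc_self ht
    have := hsolode z₀ t ht'
    rw [hv]
    simp only [hclamp t ht']
    exact this.hasDerivWithinAt
  have hfull : EqOn (sol z₁) (sol z₂) (Icc (0 : ℝ) T) := by
    apply ODE_solution_unique_of_mem_Icc_left (s := fun _ => univ) (K := K)
      (fun t _ => (hvlip t).lipschitzOnWith) (hcontsol z₁) (hderiv z₁)
      (fun _ _ => trivial) (hcontsol z₂) (hderiv z₂) (fun _ _ => trivial) hfullT
  have h0 : sol z₁ 0 = sol z₂ 0 := hfull ⟨le_refl 0, hT⟩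
  rw [hsol0, hsol0] at h0
  exact congrArg Prod.fst h0
end

section
/- Let n, p ≥ 1 and let f : ℝⁿ × ℝᵖ × ℝ → ℝⁿ be continuously differentiable. For each θ ∈ ℝᵖ let z(·; θ) : [0, T] → ℝⁿ solve z'(t) = f(z(t), θ, t) with fixed initial condition z(0; θ) = z₀, and assume θ ↦ z(t; θ) is continuously differentiable with derivative jointly continuous in (t, θ). For t ∈ [0, T] let Φ_{t,T} denote the map sending x ∈ ℝⁿ to the value at time T of the solution of y' = f(y, θ, s) with y(t) = x, and assume Φ_{t,T} is continuously differentiable with derivative jointly continuous in (t, x). Let L : ℝⁿ → ℝ be differentiable. Then d/dθ [ L(z(T; θ)) ] = ∫₀ᵀ a(t) ∘ (D_θ f)(z(t; θ), θ, t) dt, where a(t) = DL(z(T; θ)) ∘ D_x Φ_{t,T}(z(t; θ)). -/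
open Set intervalIntegral
open Asymptotics Filter Topology Metric

private lemma ev_unif {X : Type*} [TopologicalSpace X] {E' : Type*} [SeminormedAddCommGroup E']
    {g : X → ℝ → E'} {x₀ : X} {a b : ℝ}
    (hg : ∀ t ∈ Icc a b, ContinuousAt (fun q : X × ℝ => g q.1 q.2) (x₀, t))
    (h0 : ∀ t ∈ Icc a b, g x₀ t = 0) {ε : ℝ} (hε : 0 < ε) :
    ∀ᶠ x in 𝓝 x₀, ∀ t ∈ Icc a b, ‖g x t‖ ≤ ε := by
  apply isCompact_Icc.eventually_forall_of_forall_eventually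
  intro t ht
  have h2 : Tendsto (fun q : X × ℝ => ‖g q.1 q.2‖) (𝓝 (x₀, t)) (𝓝 0) := by
    have := (hg t ht).norm
    unfold ContinuousAt at this
    simpa [h0 t ht] using this
  exact (h2.eventually (ge_mem_nhds hε)).mono fun q hq => hq

private lemma clm_apply_contAt {X E F : Type*} [TopologicalSpace X] [NormedAddCommGroup E]
    [NormedAddCommGroup F] [NormedSpace ℝ E] [NormedSpace ℝ F]
    {M : X → E →L[ℝ] F} {w : X → E} {x : X}
    (hM : ContinuousAt M x) (hw : ContinuousAt w x) :
    ContinuousAt (fun q => M q (w q)) x :=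
  (isBoundedBilinearMap_apply (𝕜 := ℝ) (E := E) (F := F)).continuous.continuousAt.comp
    (hM.prodMk hw)

private lemma clm_prod_cont {X E F G : Type*} [TopologicalSpace X] [NormedAddCommGroup E]
    [NormedAddCommGroup F] [NormedAddCommGroup G] [NormedSpace ℝ E] [NormedSpace ℝ F]
    [NormedSpace ℝ G] {M : X → E →L[ℝ] F} {N : X → E →L[ℝ] G}
    (hM : Continuous M) (hN : Continuous N) :
    Continuous fun x => (M x).prod (N x) :=
  (ContinuousLinearMap.prodₗᵢ (𝕜 := ℝ) (E := E) (F := F) (G := G) ℝ).continuous.comp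
    (hM.prodMk hN)

private lemma ode_const {n p : ℕ} {T : ℝ} (hT : 0 ≤ T)
    {f : (Fin n → ℝ) × (Fin p → ℝ) × ℝ → (Fin n → ℝ)} (hf : ContDiff ℝ 1 f)
    {θ : Fin p → ℝ} {Φ : ℝ → (Fin n → ℝ) → (Fin n → ℝ)}
    (hΦ : ∀ t ∈ Icc (0:ℝ) T, ∀ x, ∃ y : ℝ → (Fin n → ℝ), y t = x ∧
      (∀ s ∈ Icc (0:ℝ) T, HasDerivAt y (f (y s, θ, s)) s) ∧ Φ t x = y T)
    {y : ℝ → Fin n → ℝ} (hy : ∀ u ∈ Icc (0:ℝ) T, HasDerivAt y (f (y u, θ, u)) u)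
    {s : ℝ} (hs : s ∈ Icc (0:ℝ) T) : Φ s (y s) = y T := by
  obtain ⟨w, hws, hwsol, hwΦ⟩ := hΦ s hs (y s)
  rw [hwΦ]
  -- both `w` and `y` solve the same ODE on `[s, T]` and agree at `s`; conclude `w T = y T`.
  set c : ℝ → ℝ := fun u => max 0 (min u T) with hc_def
  have hc_eq : ∀ u ∈ Icc (0:ℝ) T, c u = u := fun u hu => by
    simp only [hc_def]; rw [min_eq_left hu.2, max_eq_right hu.1]
  have hc_mem : ∀ u, c u ∈ Icc (0:ℝ) T := fun u =>
    ⟨le_max_left _ _, max_le hT (min_le_right _ _)⟩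
  have hsub : Icc s T ⊆ Icc 0 T := Icc_subset_Icc hs.1 le_rfl
  have hwc : ContinuousOn w (Icc s T) := fun u hu =>
    (hwsol u (hsub hu)).continuousAt.continuousWithinAt
  have hyc : ContinuousOn y (Icc s T) := fun u hu =>
    (hy u (hsub hu)).continuousAt.continuousWithinAt
  obtain ⟨Rw, hRw⟩ := (isCompact_Icc (a := s) (b := T)).exists_bound_of_continuousOn hwc
  obtain ⟨Ry, hRy⟩ := (isCompact_Icc (a := s) (b := T)).exists_bound_of_continuousOn hyc
  set R : ℝ := max Rw Ry with hR_def
  have hwR : ∀ u ∈ Icc s T, w u ∈ closedBall (0 : Fin n → ℝ) R := fun u hu => by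
    rw [mem_closedBall_zero_iff]; exact le_trans (hRw u hu) (le_max_left _ _)
  have hyR : ∀ u ∈ Icc s T, y u ∈ closedBall (0 : Fin n → ℝ) R := fun u hu => by
    rw [mem_closedBall_zero_iff]; exact le_trans (hRy u hu) (le_max_right _ _)
  -- Lipschitz constant
  have hcomp : IsCompact ((closedBall (0 : Fin n → ℝ) R) ×ˢ ({θ} ×ˢ Icc (0:ℝ) T)) :=
    (isCompact_closedBall _ _).prod ((isCompact_singleton).prod isCompact_Icc)
  obtain ⟨CK, hCK⟩ := hcomp.exists_bound_of_continuousOn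
    ((hf.continuous_fderiv one_ne_zero).continuousOn)
  set K : NNReal := ⟨max CK 0, le_max_right _ _⟩ with hK_def
  have hlip : ∀ t : ℝ, LipschitzOnWith K (fun x => f (x, θ, c t))
      (closedBall (0 : Fin n → ℝ) R) := by
    intro t
    apply Convex.lipschitzOnWith_of_nnnorm_hasFDerivWithin_le
      (f' := fun x => (fderiv ℝ f (x, θ, c t)).comp
        ((ContinuousLinearMap.id ℝ (Fin n → ℝ)).prod 0)) ?_ ?_ (convex_closedBall _ _)
    · intro x _
      exact (((hf.differentiable one_ne_zero _).hasFDerivAt).comp x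
        ((hasFDerivAt_id x).prodMk (hasFDerivAt_const (θ, c t) x))).hasFDerivWithinAt
    · intro x hx
      rw [← NNReal.coe_le_coe]
      have h1 : ‖(ContinuousLinearMap.id ℝ (Fin n → ℝ)).prod
          (0 : (Fin n → ℝ) →L[ℝ] (Fin p → ℝ) × ℝ)‖ ≤ 1 := by
        apply ContinuousLinearMap.opNorm_le_bound _ zero_le_one
        intro m
        simp [ContinuousLinearMap.prod_apply, Prod.norm_def, norm_nonneg]
      have h2 : ‖fderiv ℝ f (x, θ, c t)‖ ≤ CK :=
        hCK _ ⟨hx, ⟨rfl, hc_mem t⟩⟩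
      calc (‖(fderiv ℝ f (x, θ, c t)).comp
          ((ContinuousLinearMap.id ℝ (Fin n → ℝ)).prod 0)‖₊ : ℝ)
          ≤ ‖fderiv ℝ f (x, θ, c t)‖ * ‖(ContinuousLinearMap.id ℝ (Fin n → ℝ)).prod
            (0 : (Fin n → ℝ) →L[ℝ] (Fin p → ℝ) × ℝ)‖ := ContinuousLinearMap.opNorm_comp_le _ _
        _ ≤ CK * 1 := by
            apply mul_le_mul h2 h1 (norm_nonneg _) (le_trans (norm_nonneg _) h2)
        _ ≤ (K : ℝ) := by rw [mul_one, hK_def]; exact le_max_left _ _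
  have key := ODE_solution_unique_of_mem_Icc_right (v := fun t x => f (x, θ, c t))
    (s := fun _ => closedBall (0 : Fin n → ℝ) R) (K := K) (fun t _ => hlip t) hwc
    (fun t ht => by
      have htI : t ∈ Icc (0:ℝ) T := ⟨le_trans hs.1 ht.1, le_of_lt ht.2⟩
      simpa [hc_eq t htI] using (hwsol t htI).hasDerivWithinAt)
    (fun t ht => hwR t ⟨ht.1, le_of_lt ht.2⟩) hyc
    (fun t ht => by
      have htI : t ∈ Icc (0:ℝ) T := ⟨le_trans hs.1 ht.1, le_of_lt ht.2⟩
      simpa [hc_eq t htI] using (hy t htI).hasDerivWithinAt)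
    (fun t ht => hyR t ⟨ht.1, le_of_lt ht.2⟩) hws
  exact key ⟨hs.2, le_rfl⟩

private lemma clm_comp_contAt {X E F G : Type*} [TopologicalSpace X] [NormedAddCommGroup E]
    [NormedAddCommGroup F] [NormedAddCommGroup G] [NormedSpace ℝ E] [NormedSpace ℝ F]
    [NormedSpace ℝ G] {M : X → F →L[ℝ] G} {N : X → E →L[ℝ] F} {x : X}
    (hM : ContinuousAt M x) (hN : ContinuousAt N x) :
    ContinuousAt (fun q => (M q).comp (N q)) x :=
  ((isBoundedBilinearMap_comp (𝕜 := ℝ) (E := E) (F := F) (G := G)).continuous.continuousAt).comp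
    (hM.prodMk hN)

set_option maxHeartbeats 1000000 in
/-- **Continuous backpropagation (adjoint method gradient formula).**  For the ODE
`z' (t) = f (z t, θ, t)` with fixed initial condition `z 0 = z₀` and a differentiable
loss `L`, the gradient of the terminal loss with respect to the parameters satisfies
`d/dθ L (z (T; θ)) = ∫₀ᵀ a t ∘ (D_θ f)(z t, θ, t) dt`, where the adjoint is
`a t = DL (z T) ∘ D_x Φ_{t,T} (z t)` and `Φ_{t,T}` is the time-`t`-to-time-`T` solution
map. -/
theorem continuous_backpropagation
    (n p : ℕ) (hn : 1 ≤ n) (hp : 1 ≤ p) (T : ℝ) (hT : 0 ≤ T)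
    (f : (Fin n → ℝ) × (Fin p → ℝ) × ℝ → (Fin n → ℝ)) (hf : ContDiff ℝ 1 f)
    (z₀ : Fin n → ℝ) (z : (Fin p → ℝ) → ℝ → (Fin n → ℝ))
    (hz0 : ∀ θ', z θ' 0 = z₀)
    (hzode : ∀ θ', ∀ t ∈ Icc (0 : ℝ) T,
      HasDerivAt (z θ') (f (z θ' t, θ', t)) t)
    (Dz : ℝ → (Fin p → ℝ) → ((Fin p → ℝ) →L[ℝ] (Fin n → ℝ)))
    (hDz : ∀ t ∈ Icc (0 : ℝ) T, ∀ θ', HasFDerivAt (fun θ'' => z θ'' t) (Dz t θ') θ')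
    (hDzcont : Continuous fun s : ℝ × (Fin p → ℝ) => Dz s.1 s.2)
    (θ : Fin p → ℝ)
    (Φ : ℝ → (Fin n → ℝ) → (Fin n → ℝ))
    (hΦ : ∀ t ∈ Icc (0 : ℝ) T, ∀ x, ∃ y : ℝ → (Fin n → ℝ),
      y t = x ∧ (∀ s ∈ Icc (0 : ℝ) T, HasDerivAt y (f (y s, θ, s)) s) ∧
        Φ t x = y T)
    (DΦ : ℝ → (Fin n → ℝ) → ((Fin n → ℝ) →L[ℝ] (Fin n → ℝ)))
    (hDΦ : ∀ t ∈ Icc (0 : ℝ) T, ∀ x, HasFDerivAt (Φ t) (DΦ t x) x)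
    (hDΦcont : Continuous fun s : ℝ × (Fin n → ℝ) => DΦ s.1 s.2)
    (L : (Fin n → ℝ) → ℝ) (hL : Differentiable ℝ L)
    (a : ℝ → ((Fin n → ℝ) →L[ℝ] ℝ))
    (ha : a = fun t => (fderiv ℝ L (z θ T)).comp (DΦ t (z θ t))) :
    fderiv ℝ (fun θ' => L (z θ' T)) θ = ∫ t in (0 : ℝ)..T,
      (a t).comp (fderiv ℝ (fun w => f (z θ t, w, t)) θ) := by
  subst ha
  have hT0 : (0:ℝ) ∈ Icc (0:ℝ) T := ⟨le_rfl, hT⟩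
  have hTT : T ∈ Icc (0:ℝ) T := ⟨hT, le_rfl⟩
  have hfd : Differentiable ℝ f := hf.differentiable one_ne_zero
  have hDfc : Continuous (fderiv ℝ f) := hf.continuous_fderiv one_ne_zero
  set c : ℝ → ℝ := fun u => max 0 (min u T) with hc_def
  have hc_cont : Continuous c := continuous_const.max (continuous_id.min continuous_const)
  have hc_eq : ∀ u ∈ Icc (0:ℝ) T, c u = u := fun u hu => by
    simp only [hc_def]; rw [min_eq_left hu.2, max_eq_right hu.1]
  have hc_mem : ∀ u, c u ∈ Icc (0:ℝ) T := fun u =>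
    ⟨le_max_left _ _, max_le hT (min_le_right _ _)⟩
  have hzcont : ∀ x, ContinuousOn (z x) (Icc (0:ℝ) T) := fun x u hu =>
    (hzode x u hu).continuousAt.continuousWithinAt
  have hzccont : ∀ x, Continuous fun u => z x (c u) := fun x =>
    (hzcont x).comp_continuous hc_cont hc_mem
  -- the difference field and its parameter derivative
  set v : (Fin p → ℝ) → ℝ → (Fin n → ℝ) := fun x t => f (z x t, x, t) - f (z x t, θ, t)
    with hv_def
  set Dv : (Fin p → ℝ) → ℝ → ((Fin p → ℝ) →L[ℝ] (Fin n → ℝ)) := fun x t =>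
    (fderiv ℝ f (z x t, x, t)).comp
      ((Dz t x).prod ((ContinuousLinearMap.id ℝ (Fin p → ℝ)).prod 0)) -
    (fderiv ℝ f (z x t, θ, t)).comp ((Dz t x).prod 0) with hDv_def
  have hvderiv : ∀ t ∈ Icc (0:ℝ) T, ∀ x, HasFDerivAt (fun x' => v x' t) (Dv x t) x := by
    intro t ht x
    have h1 : HasFDerivAt (fun x' => ((z x' t, (x', t)) : (Fin n → ℝ) × (Fin p → ℝ) × ℝ))
        ((Dz t x).prod ((ContinuousLinearMap.id ℝ (Fin p → ℝ)).prod 0)) x :=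
      (hDz t ht x).prodMk ((hasFDerivAt_id x).prodMk (hasFDerivAt_const t x))
    have h2 : HasFDerivAt (fun x' => ((z x' t, (θ, t)) : (Fin n → ℝ) × (Fin p → ℝ) × ℝ))
        ((Dz t x).prod 0) x :=
      (hDz t ht x).prodMk (hasFDerivAt_const (θ, t) x)
    exact ((hfd _).hasFDerivAt.comp x h1).sub ((hfd _).hasFDerivAt.comp x h2)
  have hDvθ : ∀ t ∈ Icc (0:ℝ) T, Dv θ t = fderiv ℝ (fun w => f (z θ t, w, t)) θ := by
    intro t ht
    have hR : HasFDerivAt (fun w => f (z θ t, w, t))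
        ((fderiv ℝ f (z θ t, θ, t)).comp
          ((0 : (Fin p → ℝ) →L[ℝ] (Fin n → ℝ)).prod
            ((ContinuousLinearMap.id ℝ (Fin p → ℝ)).prod 0))) θ :=
      (hfd _).hasFDerivAt.comp θ ((hasFDerivAt_const (z θ t) θ).prodMk
        ((hasFDerivAt_id θ).prodMk (hasFDerivAt_const t θ)))
    rw [hR.fderiv]
    ext m
    simp only [hDv_def, ContinuousLinearMap.sub_apply, ContinuousLinearMap.comp_apply,
      ContinuousLinearMap.prod_apply, ContinuousLinearMap.coe_id', id_eq,
      ContinuousLinearMap.zero_apply]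
    rw [← map_sub]
    congr 1
    simp [Prod.mk_sub_mk]
  -- bounds on Dz, and Lipschitz continuity of z in the parameter
  obtain ⟨CDz, hCDz⟩ := ((isCompact_Icc (a := (0:ℝ)) (b := T)).prod
    (isCompact_closedBall θ 2)).exists_bound_of_continuousOn hDzcont.continuousOn
  have hzLip : ∀ t ∈ Icc (0:ℝ) T, ∀ x₁ ∈ closedBall θ 2, ∀ x₂ ∈ closedBall θ 2,
      ‖z x₁ t - z x₂ t‖ ≤ CDz * ‖x₁ - x₂‖ := by
    intro t ht x₁ hx₁ x₂ hx₂
    exact Convex.norm_image_sub_le_of_norm_hasFDerivWithin_le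
      (f' := fun x' => Dz t x')
      (fun x' hx' => (hDz t ht x').hasFDerivWithinAt)
      (fun x' hx' => hCDz (t, x') ⟨ht, hx'⟩) (convex_closedBall θ 2) hx₂ hx₁
  -- joint continuity of the (time-clamped) solution flow
  have hZcAt : ∀ q₀ : (Fin p → ℝ) × ℝ, q₀.1 ∈ ball θ 2 →
      ContinuousAt (fun q : (Fin p → ℝ) × ℝ => z q.1 (c q.2)) q₀ := by
    rintro ⟨x₀, u₀⟩ hq₀
    have h2 : Filter.Tendsto (fun q : (Fin p → ℝ) × ℝ => z x₀ (c q.2)) (𝓝 (x₀, u₀))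
        (𝓝 (z x₀ (c u₀))) := ((hzccont x₀).comp continuous_snd).tendsto (x₀, u₀)
    have h1 : Filter.Tendsto (fun q : (Fin p → ℝ) × ℝ => z q.1 (c q.2) - z x₀ (c q.2))
        (𝓝 (x₀, u₀)) (𝓝 0) := by
      apply squeeze_zero_norm'
      · filter_upwards [(continuous_fst.tendsto (x₀, u₀)).eventually
          (isOpen_ball.eventually_mem hq₀)] with q hq
        exact hzLip (c q.2) (hc_mem _) q.1 (ball_subset_closedBall hq) x₀
          (ball_subset_closedBall hq₀)
      · have : Filter.Tendsto (fun q : (Fin p → ℝ) × ℝ => CDz * ‖q.1 - x₀‖) (𝓝 (x₀, u₀))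
            (𝓝 (CDz * ‖x₀ - x₀‖)) :=
          (continuous_const.mul ((continuous_fst.sub continuous_const).norm)).tendsto _
        simpa using this
    have := h1.add h2
    simpa [ContinuousAt] using this
  -- continuity of the clamped adjoint field and of Dv
  have hAcAt : ∀ q₀ : (Fin p → ℝ) × ℝ, q₀.1 ∈ ball θ 2 →
      ContinuousAt (fun q : (Fin p → ℝ) × ℝ => DΦ (c q.2) (z q.1 (c q.2))) q₀ :=
    fun q₀ hq₀ => hDΦcont.continuousAt.comp
      (((hc_cont.comp continuous_snd).continuousAt).prodMk (hZcAt q₀ hq₀))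
  have hDvcAt : ∀ q₀ : (Fin p → ℝ) × ℝ, q₀.1 ∈ ball θ 2 →
      ContinuousAt (fun q : (Fin p → ℝ) × ℝ => Dv q.1 (c q.2)) q₀ := by
    intro q₀ hq₀
    have hcs : ContinuousAt (fun q : (Fin p → ℝ) × ℝ => c q.2) q₀ :=
      (hc_cont.comp continuous_snd).continuousAt
    have hDzc : ContinuousAt (fun q : (Fin p → ℝ) × ℝ => Dz (c q.2) q.1) q₀ :=
      hDzcont.continuousAt.comp (hcs.prodMk continuous_fst.continuousAt)
    have hW1 : ContinuousAt (fun q : (Fin p → ℝ) × ℝ => (Dz (c q.2) q.1).prod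
        ((ContinuousLinearMap.id ℝ (Fin p → ℝ)).prod
          (0 : (Fin p → ℝ) →L[ℝ] ℝ))) q₀ :=
      ((ContinuousLinearMap.prodₗᵢ (𝕜 := ℝ) ℝ).continuous.continuousAt).comp
        (hDzc.prodMk continuousAt_const)
    have hW2 : ContinuousAt (fun q : (Fin p → ℝ) × ℝ => (Dz (c q.2) q.1).prod
        (0 : (Fin p → ℝ) →L[ℝ] (Fin p → ℝ) × ℝ)) q₀ :=
      ((ContinuousLinearMap.prodₗᵢ (𝕜 := ℝ) ℝ).continuous.continuousAt).comp
        (hDzc.prodMk continuousAt_const)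
    have hdf1 : ContinuousAt (fun q : (Fin p → ℝ) × ℝ =>
        fderiv ℝ f (z q.1 (c q.2), q.1, c q.2)) q₀ :=
      hDfc.continuousAt.comp ((hZcAt q₀ hq₀).prodMk (continuous_fst.continuousAt.prodMk hcs))
    have hdf2 : ContinuousAt (fun q : (Fin p → ℝ) × ℝ =>
        fderiv ℝ f (z q.1 (c q.2), θ, c q.2)) q₀ :=
      hDfc.continuousAt.comp ((hZcAt q₀ hq₀).prodMk (continuousAt_const.prodMk hcs))
    exact ((clm_comp_contAt hdf1 hW1).sub (clm_comp_contAt hdf2 hW2))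
  -- uniform bounds
  have hbsub : closedBall θ 1 ⊆ ball θ 2 := closedBall_subset_ball one_lt_two
  obtain ⟨CA, hCA⟩ := ((isCompact_closedBall θ 1).prod
      (isCompact_Icc (a := (0:ℝ)) (b := T))).exists_bound_of_continuousOn
    (f := fun q : (Fin p → ℝ) × ℝ => DΦ (c q.2) (z q.1 (c q.2)))
    (fun q hq => (hAcAt q (hbsub hq.1)).continuousWithinAt)
  have hCA' : ∀ x ∈ closedBall θ 1, ∀ t ∈ Icc (0:ℝ) T, ‖DΦ t (z x t)‖ ≤ CA := by
    intro x hx t ht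
    have := hCA (x, t) ⟨hx, ht⟩
    rwa [hc_eq t ht] at this
  have hCA0 : 0 ≤ CA := le_trans (norm_nonneg _)
    (hCA' θ (mem_closedBall_self zero_le_one) 0 hT0)
  obtain ⟨CDv, hCDv⟩ := (isCompact_Icc (a := (0:ℝ)) (b := T)).exists_bound_of_continuousOn
    (f := fun t : ℝ => Dv θ (c t))
    (fun t _ => ((hDvcAt (θ, t) (mem_ball_self two_pos)).comp
      ((continuous_const.prodMk continuous_id).continuousAt)).continuousWithinAt)
  have hCDv' : ∀ t ∈ Icc (0:ℝ) T, ‖Dv θ t‖ ≤ CDv := by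
    intro t ht
    have := hCDv t ht
    rwa [hc_eq t ht] at this
  have hCDv0 : 0 ≤ CDv := le_trans (norm_nonneg _) (hCDv' 0 hT0)
  have hDvθc_cont : Continuous fun u : ℝ => Dv θ (c u) :=
    continuous_iff_continuousAt.mpr fun u => (hDvcAt (θ, u) (mem_ball_self two_pos)).comp
      ((continuous_const.prodMk continuous_id).continuousAt)
  -- uniform smallness estimates
  have E2 : ∀ ε > (0:ℝ), ∀ᶠ x in 𝓝 θ, ∀ t ∈ Icc (0:ℝ) T,
      ‖DΦ t (z x t) - DΦ t (z θ t)‖ ≤ ε := by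
    intro ε hε
    have := ev_unif (g := fun x t => DΦ (c t) (z x (c t)) - DΦ (c t) (z θ (c t))) (x₀ := θ)
      (a := 0) (b := T)
      (fun t _ => ((hAcAt (θ, t) (mem_ball_self two_pos)).sub
        (((hDΦcont.comp (hc_cont.prodMk (hzccont θ))).comp continuous_snd).continuousAt)))
      (fun t _ => sub_self _) hε
    filter_upwards [this] with x hx t ht
    have := hx t ht
    rwa [hc_eq t ht] at this
  have E1' : ∀ ε > (0:ℝ), ∀ᶠ x in 𝓝 θ, ∀ t ∈ Icc (0:ℝ) T, ‖Dv x t - Dv θ t‖ ≤ ε := by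
    intro ε hε
    have := ev_unif (g := fun x t => Dv x (c t) - Dv θ (c t)) (x₀ := θ) (a := 0) (b := T)
      (fun t _ => ((hDvcAt (θ, t) (mem_ball_self two_pos)).sub
        ((hDvθc_cont.comp continuous_snd).continuousAt)))
      (fun t _ => sub_self _) hε
    filter_upwards [this] with x hx t ht
    have := hx t ht
    rwa [hc_eq t ht] at this
  have E1 : ∀ ε > (0:ℝ), ∀ᶠ x in 𝓝 θ, ∀ t ∈ Icc (0:ℝ) T,
      ‖v x t - Dv θ t (x - θ)‖ ≤ ε * ‖x - θ‖ := by
    intro ε hε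
    obtain ⟨δ, hδ0, hδ⟩ := Metric.eventually_nhds_iff.mp (E1' ε hε)
    filter_upwards [Metric.ball_mem_nhds θ hδ0] with x hx t ht
    have hmv := Convex.norm_image_sub_le_of_norm_hasFDerivWithin_le
      (f := fun x' => v x' t - Dv θ t x') (f' := fun x' => Dv x' t - Dv θ t) (s := ball θ δ)
      (fun x' hx' => ((hvderiv t ht x').sub ((Dv θ t).hasFDerivAt)).hasFDerivWithinAt)
      (fun x' hx' => hδ (mem_ball.mp hx') t ht)
      (convex_ball θ δ) (mem_ball_self hδ0) hx
    have hvθ : v θ t = 0 := sub_self _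
    have heq : v x t - Dv θ t (x - θ) = (v x t - Dv θ t x) - (v θ t - Dv θ t θ) := by
      rw [hvθ, map_sub]; abel
    rw [heq]
    exact hmv
  -- constancy of Φ along solutions, and Φ_T = id
  have hconst : ∀ y : ℝ → (Fin n → ℝ), (∀ u ∈ Icc (0:ℝ) T, HasDerivAt y (f (y u, θ, u)) u) →
      ∀ s ∈ Icc (0:ℝ) T, Φ s (y s) = y T := fun y hy s hs => ode_const hT hf hΦ hy hs
  have hΦTid : ∀ w, Φ T w = w := by
    intro w
    obtain ⟨y, hyT, -, hΦT⟩ := hΦ T hTT w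
    rw [hΦT, hyT]
  -- continuity of the integrand of (†)
  have hgcont : ∀ x, ContinuousOn (fun s => DΦ s (z x s) (v x s)) (Icc (0:ℝ) T) := by
    intro x
    apply ContinuousOn.clm_apply
    · exact hDΦcont.comp_continuousOn (continuousOn_id.prodMk (hzcont x))
    · exact (hf.continuous.comp_continuousOn
        ((hzcont x).prodMk (continuousOn_const.prodMk continuousOn_id))).sub
        (hf.continuous.comp_continuousOn
          ((hzcont x).prodMk (continuousOn_const.prodMk continuousOn_id)))
  have hgint : ∀ x, IntervalIntegrable (fun s => DΦ s (z x s) (v x s))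
      MeasureTheory.volume 0 T := by
    intro x
    apply ContinuousOn.intervalIntegrable
    rw [uIcc_of_le hT]
    exact hgcont x
  -- the key integral identity (†)
  have key : ∀ x, z x T - z θ T = ∫ t in (0:ℝ)..T, DΦ t (z x t) (v x t) := by
    intro x
    set F : ℝ → Fin n → ℝ := fun s => Φ s (z x s) with hF_def
    have hFderiv : ∀ s ∈ Icc (0:ℝ) T,
        HasDerivWithinAt F (DΦ s (z x s) (v x s)) (Icc (0:ℝ) T) s := by
      intro s hs
      obtain ⟨y, hys, hysol, -⟩ := hΦ s hs (z x s)
      have hyT : ∀ u ∈ Icc (0:ℝ) T, Φ u (y u) = y T := fun u hu => hconst y hysol u hu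
      have hFs : F s = y T := by
        simp only [hF_def]
        rw [← hys]
        exact hyT s hs
      rw [hasDerivWithinAt_iff_isLittleO, Asymptotics.isLittleO_iff]
      intro ε hε
      set x₀ := z x s with hx₀
      set Δ : Fin n → ℝ := f (x₀, x, s) - f (x₀, θ, s) with hΔ
      have hvxs : v x s = Δ := rfl
      set Cd : ℝ := ‖DΦ s x₀‖ with hCd
      have hCd0 : 0 ≤ Cd := norm_nonneg _
      set ε₁ : ℝ := ε / (2 * (‖Δ‖ + 1)) with hε₁
      have hε₁0 : 0 < ε₁ := by apply div_pos hε; positivity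
      set ε₂ : ℝ := min 1 (ε / (2 * (Cd + 1))) with hε₂
      have hε₂0 : 0 < ε₂ := lt_min one_pos (by apply div_pos hε; positivity)
      have hδder : HasDerivAt (fun u => z x u - y u) Δ s := by
        have h := (hzode x s hs).sub (hysol s hs)
        rwa [hys] at h
      have hδo := hasDerivAt_iff_isLittleO.mp hδder
      have hδ0 : z x s - y s = 0 := by rw [hys, sub_self]
      have h1 : ∀ᶠ u in 𝓝 s, ‖(z x u - y u) - (u - s) • Δ‖ ≤ ε₂ * ‖u - s‖ := by
        filter_upwards [Asymptotics.isLittleO_iff.mp hδo hε₂0] with u hu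
        rw [hδ0, sub_zero] at hu
        exact hu
      obtain ⟨ρ, hρ0, hρ⟩ := Metric.eventually_nhds_iff.mp
        ((hDΦcont.continuousAt (x := (s, x₀))).eventually
          (Metric.closedBall_mem_nhds (DΦ s x₀) hε₁0))
      have e_z : ∀ᶠ u in 𝓝 s, dist (z x u) x₀ < ρ :=
        (hzode x s hs).continuousAt.eventually (Metric.ball_mem_nhds _ hρ0)
      have e_y : ∀ᶠ u in 𝓝 s, dist (y u) x₀ < ρ := by
        have h := (hysol s hs).continuousAt.eventually (Metric.ball_mem_nhds (y s) hρ0)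
        rw [hys] at h
        exact h
      have e_u : ∀ᶠ u in 𝓝 s, dist u s < ρ := Metric.ball_mem_nhds s hρ0
      filter_upwards [h1.filter_mono nhdsWithin_le_nhds, e_z.filter_mono nhdsWithin_le_nhds,
        e_y.filter_mono nhdsWithin_le_nhds, e_u.filter_mono nhdsWithin_le_nhds,
        self_mem_nhdsWithin] with u h1u hzu hyu huu humem
      have hΦuy : Φ u (y u) = y T := hyT u humem
      have hδu_bound : ‖z x u - y u‖ ≤ (‖Δ‖ + 1) * ‖u - s‖ := by
        calc ‖z x u - y u‖ ≤ ‖(z x u - y u) - (u - s) • Δ‖ + ‖(u - s) • Δ‖ := by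
              have h := norm_add_le ((z x u - y u) - (u - s) • Δ) ((u - s) • Δ)
              simpa using h
          _ ≤ ε₂ * ‖u - s‖ + ‖u - s‖ * ‖Δ‖ := by
              refine add_le_add h1u (le_of_eq ?_)
              rw [norm_smul]
          _ ≤ 1 * ‖u - s‖ + ‖Δ‖ * ‖u - s‖ := by
              refine add_le_add (mul_le_mul_of_nonneg_right (min_le_left _ _) (norm_nonneg _))
                (le_of_eq (mul_comm _ _))
          _ = (‖Δ‖ + 1) * ‖u - s‖ := by ring
      have hseg : ∀ w ∈ segment ℝ (y u) (z x u), ‖DΦ u w - DΦ s x₀‖ ≤ ε₁ := by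
        intro w hw
        have hwball : w ∈ closedBall x₀ (max (dist (y u) x₀) (dist (z x u) x₀)) :=
          (convex_closedBall _ _).segment_subset
            (mem_closedBall.2 (le_max_left _ _)) (mem_closedBall.2 (le_max_right _ _)) hw
        have hdist : dist ((u, w) : ℝ × (Fin n → ℝ)) (s, x₀) < ρ := by
          rw [Prod.dist_eq]
          exact max_lt huu (lt_of_le_of_lt (mem_closedBall.1 hwball) (max_lt hyu hzu))
        have h := hρ hdist
        simp only [Metric.mem_closedBall] at h
        rwa [dist_eq_norm] at h
      have hmv := Convex.norm_image_sub_le_of_norm_hasFDerivWithin_le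
        (f := fun w => Φ u w - DΦ s x₀ w) (f' := fun w => DΦ u w - DΦ s x₀)
        (s := segment ℝ (y u) (z x u))
        (fun w hw => ((hDΦ u humem w).sub ((DΦ s x₀).hasFDerivAt)).hasFDerivWithinAt)
        hseg (convex_segment _ _) (left_mem_segment ℝ _ _) (right_mem_segment ℝ _ _)
      have hmap : DΦ s x₀ ((z x u - y u) - (u - s) • Δ)
          = (DΦ s x₀ (z x u) - DΦ s x₀ (y u)) - (u - s) • (DΦ s x₀ Δ) := by
        rw [map_sub, map_sub, map_smul]
      have key_eq : Φ u (z x u) - y T - (u - s) • (DΦ s x₀ Δ) =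
          ((Φ u (z x u) - DΦ s x₀ (z x u)) - (Φ u (y u) - DΦ s x₀ (y u)))
          + DΦ s x₀ ((z x u - y u) - (u - s) • Δ) := by
        rw [hmap, ← hΦuy]
        abel
      rw [hvxs, hFs]
      simp only [hF_def]
      rw [key_eq]
      have hΔne : (0:ℝ) < ‖Δ‖ + 1 := by positivity
      have hΔ0 : ‖Δ‖ + 1 ≠ 0 := ne_of_gt hΔne
      have hhalf1 : ε₁ * (‖Δ‖ + 1) ≤ ε / 2 := by
        apply le_of_eq
        rw [hε₁]
        field_simp
      have hhalf2 : Cd * ε₂ ≤ ε / 2 := by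
        have h0 : (0:ℝ) < Cd + 1 := by positivity
        have hA : Cd * ε₂ ≤ Cd * (ε / (2 * (Cd + 1))) :=
          mul_le_mul_of_nonneg_left (min_le_right _ _) hCd0
        have hB : Cd * (ε / (2 * (Cd + 1))) ≤ ε / 2 := by
          rw [mul_div_assoc', div_le_div_iff₀ (by positivity) two_pos]
          nlinarith [mul_nonneg hCd0 hε.le]
        exact le_trans hA hB
      have hb2 : ‖DΦ s x₀ ((z x u - y u) - (u - s) • Δ)‖ ≤ Cd * (ε₂ * ‖u - s‖) :=
        le_trans ((DΦ s x₀).le_opNorm _) (mul_le_mul_of_nonneg_left h1u hCd0)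
      have hb1 : ‖(Φ u (z x u) - DΦ s x₀ (z x u)) - (Φ u (y u) - DΦ s x₀ (y u))‖
          ≤ ε₁ * ((‖Δ‖ + 1) * ‖u - s‖) :=
        le_trans hmv (mul_le_mul_of_nonneg_left hδu_bound hε₁0.le)
      calc ‖((Φ u (z x u) - DΦ s x₀ (z x u)) - (Φ u (y u) - DΦ s x₀ (y u)))
            + DΦ s x₀ ((z x u - y u) - (u - s) • Δ)‖
          ≤ ε₁ * ((‖Δ‖ + 1) * ‖u - s‖) + Cd * (ε₂ * ‖u - s‖) :=
            le_trans (norm_add_le _ _) (add_le_add hb1 hb2)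
        _ ≤ (ε / 2) * ‖u - s‖ + (ε / 2) * ‖u - s‖ := by
            refine add_le_add ?_ ?_
            · rw [← mul_assoc]
              exact mul_le_mul_of_nonneg_right hhalf1 (norm_nonneg _)
            · rw [← mul_assoc]
              exact mul_le_mul_of_nonneg_right hhalf2 (norm_nonneg _)
        _ = ε * ‖u - s‖ := by ring
    have hFcont : ContinuousOn F (Icc (0:ℝ) T) := fun s hs =>
      (hFderiv s hs).continuousWithinAt
    have hFTC := intervalIntegral.integral_eq_sub_of_hasDeriv_right_of_le hT hFcont
      (fun s hs => ((hFderiv s (Ioo_subset_Icc_self hs)).hasDerivAt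
        (Icc_mem_nhds hs.1 hs.2)).hasDerivWithinAt) (hgint x)
    rw [hFTC]
    have hFT : F T = z x T := by simp only [hF_def]; exact hΦTid _
    have hF0 : F 0 = z θ T := by
      simp only [hF_def]
      rw [hz0 x, ← hz0 θ]
      exact hconst (z θ) (hzode θ) 0 hT0
    rw [hFT, hF0]
  -- the Fréchet derivative of `x ↦ z x T` is `I = ∫ DΦ ∘ Dv`
  set M : ℝ → ((Fin p → ℝ) →L[ℝ] (Fin n → ℝ)) :=
    fun t => (DΦ (c t) (z θ (c t))).comp (Dv θ (c t)) with hM_def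
  have hMcont : Continuous M :=
    Continuous.clm_comp (hDΦcont.comp (hc_cont.prodMk (hzccont θ))) hDvθc_cont
  have hMint : IntervalIntegrable M MeasureTheory.volume 0 T :=
    hMcont.intervalIntegrable _ _
  have hMeq : ∀ t ∈ Icc (0:ℝ) T, M t = (DΦ t (z θ t)).comp (Dv θ t) := by
    intro t ht
    simp only [hM_def]
    rw [hc_eq t ht]
  set I : (Fin p → ℝ) →L[ℝ] (Fin n → ℝ) := ∫ t in (0:ℝ)..T, M t with hI_def
  have hIzT : HasFDerivAt (fun x => z x T) I θ := by
    rw [hasFDerivAt_iff_isLittleO_nhds_zero, Asymptotics.isLittleO_iff]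
    intro ε hε
    set ε₁ : ℝ := ε / (2 * (CA + 1) * (T + 1)) with hε₁d
    have hε₁0 : 0 < ε₁ := by apply div_pos hε; positivity
    set ε₂ : ℝ := ε / (2 * (CDv + 1) * (T + 1)) with hε₂d
    have hε₂0 : 0 < ε₂ := by apply div_pos hε; positivity
    have hadd : Filter.Tendsto (fun h : Fin p → ℝ => θ + h) (𝓝 0) (𝓝 θ) := by
      have h := (Continuous.tendsto
        (continuous_const.add continuous_id : Continuous fun h : Fin p → ℝ => θ + h)
        (0 : Fin p → ℝ))
      simpa [Pi.add_def] using h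
    have hball : ∀ᶠ h : (Fin p → ℝ) in 𝓝 0, θ + h ∈ closedBall θ 1 :=
      hadd.eventually (Metric.closedBall_mem_nhds θ one_pos)
    filter_upwards [hadd.eventually (E1 ε₁ hε₁0), hadd.eventually (E2 ε₂ hε₂0), hball]
      with h hE1 hE2 hb
    have hIh : I h = ∫ t in (0:ℝ)..T, M t h := by
      have hc := (ContinuousLinearMap.apply ℝ (Fin n → ℝ) h).intervalIntegral_comp_comm hMint
      simp only [ContinuousLinearMap.apply_apply] at hc
      rw [hI_def, ← hc]
    have hint2 : IntervalIntegrable (fun t => M t h) MeasureTheory.volume 0 T :=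
      (hMcont.clm_apply continuous_const).intervalIntegrable _ _
    rw [hIh, key (θ + h), ← intervalIntegral.integral_sub (hgint (θ + h)) hint2]
    have hbound : ∀ t ∈ Set.uIoc (0:ℝ) T,
        ‖DΦ t (z (θ + h) t) (v (θ + h) t) - M t h‖ ≤ (CA * ε₁ + ε₂ * CDv) * ‖h‖ := by
      intro t ht
      have htI : t ∈ Icc (0:ℝ) T := by
        rw [uIoc_of_le hT] at ht
        exact Ioc_subset_Icc_self ht
      rw [hMeq t htI]
      have hsplit : DΦ t (z (θ + h) t) (v (θ + h) t) - ((DΦ t (z θ t)).comp (Dv θ t)) h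
          = DΦ t (z (θ + h) t) (v (θ + h) t - Dv θ t h)
            + (DΦ t (z (θ + h) t) - DΦ t (z θ t)) (Dv θ t h) := by
        simp only [ContinuousLinearMap.comp_apply, map_sub, ContinuousLinearMap.sub_apply]
        abel
      rw [hsplit]
      have hv1 : ‖v (θ + h) t - Dv θ t h‖ ≤ ε₁ * ‖h‖ := by
        have hh := hE1 t htI
        simpa [add_sub_cancel_left] using hh
      have hx1 : ‖DΦ t (z (θ + h) t) (v (θ + h) t - Dv θ t h)‖ ≤ CA * (ε₁ * ‖h‖) :=
        le_trans ((DΦ t (z (θ + h) t)).le_opNorm _)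
          (mul_le_mul (hCA' (θ + h) hb t htI) hv1 (norm_nonneg _) hCA0)
      have hx2 : ‖(DΦ t (z (θ + h) t) - DΦ t (z θ t)) (Dv θ t h)‖ ≤ ε₂ * (CDv * ‖h‖) :=
        le_trans ((DΦ t (z (θ + h) t) - DΦ t (z θ t)).le_opNorm _)
          (mul_le_mul (hE2 t htI)
            (le_trans ((Dv θ t).le_opNorm h)
              (mul_le_mul_of_nonneg_right (hCDv' t htI) (norm_nonneg _)))
            (norm_nonneg _) hε₂0.le)
      calc ‖DΦ t (z (θ + h) t) (v (θ + h) t - Dv θ t h)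
            + (DΦ t (z (θ + h) t) - DΦ t (z θ t)) (Dv θ t h)‖
          ≤ CA * (ε₁ * ‖h‖) + ε₂ * (CDv * ‖h‖) :=
            le_trans (norm_add_le _ _) (add_le_add hx1 hx2)
        _ = (CA * ε₁ + ε₂ * CDv) * ‖h‖ := by ring
    apply le_trans (intervalIntegral.norm_integral_le_of_norm_le_const hbound)
    rw [sub_zero, abs_of_nonneg hT]
    have hD : (0:ℝ) < 2 * (CA + 1) * (T + 1) := by positivity
    have hD' : (0:ℝ) < 2 * (CDv + 1) * (T + 1) := by positivity
    have k1 : CA * ε₁ * T ≤ ε / 2 := by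
      rw [hε₁d]
      rw [show CA * (ε / (2 * (CA + 1) * (T + 1))) * T
          = (CA * ε * T) / (2 * (CA + 1) * (T + 1)) by ring]
      rw [div_le_div_iff₀ hD two_pos]
      nlinarith [mul_nonneg (mul_nonneg hCA0 hε.le) hT, mul_nonneg hCA0 hε.le,
        mul_nonneg hε.le hT, hε.le]
    have k2 : ε₂ * CDv * T ≤ ε / 2 := by
      rw [hε₂d]
      rw [show ε / (2 * (CDv + 1) * (T + 1)) * CDv * T
          = (CDv * ε * T) / (2 * (CDv + 1) * (T + 1)) by ring]
      rw [div_le_div_iff₀ hD' two_pos]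
      nlinarith [mul_nonneg (mul_nonneg hCDv0 hε.le) hT, mul_nonneg hCDv0 hε.le,
        mul_nonneg hε.le hT, hε.le]
    calc (CA * ε₁ + ε₂ * CDv) * ‖h‖ * T = (CA * ε₁ * T + ε₂ * CDv * T) * ‖h‖ := by ring
      _ ≤ (ε / 2 + ε / 2) * ‖h‖ :=
          mul_le_mul_of_nonneg_right (add_le_add k1 k2) (norm_nonneg _)
      _ = ε * ‖h‖ := by ring
  -- conclusion: chain rule and rewriting of the integrand
  have hLd : HasFDerivAt (fun x => L (z x T)) ((fderiv ℝ L (z θ T)).comp I) θ :=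
    ((hL (z θ T)).hasFDerivAt).comp θ hIzT
  rw [hLd.fderiv]
  have hcomm := (ContinuousLinearMap.compL ℝ (Fin p → ℝ) (Fin n → ℝ) ℝ
    (fderiv ℝ L (z θ T))).intervalIntegral_comp_comm hMint
  simp only [ContinuousLinearMap.compL_apply] at hcomm
  rw [hI_def, ← hcomm]
  apply intervalIntegral.integral_congr
  intro t ht
  rw [uIcc_of_le hT] at ht
  dsimp only
  rw [hMeq t ht, hDvθ t ht]
  exact (ContinuousLinearMap.comp_assoc _ _ _).symm
end

section
/- Let n, m ≥ 1 and let A₁₁ : ℝ → Matrix n n ℝ, A₁₂ : ℝ → Matrix n m ℝ, A₂₂ : ℝ → Matrix m m ℝ be continuous, and set A(t) to be the block upper triangular matrix with blocks A₁₁(t), A₁₂(t) on top and 0, A₂₂(t) on the bottom. Let Y : ℝ → Matrix (n+m) (n+m) ℝ be differentiable with Y'(t) = A(t) * Y(t) for t ∈ [0, T] and Y(0) = 1. Then for every t ∈ [0, T], Y(t) is block upper triangular (its lower-left block of size m × n is zero), and its top-left n × n block Y₁₁(t) satisfies Y₁₁'(t) = A₁₁(t) * Y₁₁(t) with Y₁₁(0)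 = 1. -/
open Set Matrix

attribute [local instance] Matrix.normedAddCommGroup Matrix.normedSpace

/-- `toBlocks₂₁` as a continuous linear map. -/
noncomputable def toBlocks21L (n m : ℕ) :
    Matrix (Fin n ⊕ Fin m) (Fin n ⊕ Fin m) ℝ →L[ℝ] Matrix (Fin m) (Fin n) ℝ :=
  LinearMap.toContinuousLinearMap
    { toFun := Matrix.toBlocks₂₁
      map_add' := fun _ _ => rfl
      map_smul' := fun _ _ => rfl }

/-- `toBlocks₁₁` as a continuous linear map. -/
noncomputable def toBlocks11L (n m : ℕ) :
    Matrix (Fin n ⊕ Fin m) (Fin n ⊕ Fin m) ℝ →L[ℝ] Matrix (Fin n) (Fin n) ℝ :=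
  LinearMap.toContinuousLinearMap
    { toFun := Matrix.toBlocks₁₁
      map_add' := fun _ _ => rfl
      map_smul' := fun _ _ => rfl }

lemma norm_mul_le_card_mul (n m : ℕ) (M : Matrix (Fin m) (Fin m) ℝ)
    (Z : Matrix (Fin m) (Fin n) ℝ) {C : ℝ} (hC : 0 ≤ C) (hM : ‖M‖ ≤ C) :
    ‖M * Z‖ ≤ (m : ℝ) * C * ‖Z‖ := by
  have hZ : (0 : ℝ) ≤ ‖Z‖ := norm_nonneg _
  rw [Matrix.norm_le_iff (by positivity)]
  intro i j
  calc ‖(M * Z) i j‖ = ‖∑ k, M i k * Z k j‖ := by rw [Matrix.mul_apply]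
    _ ≤ ∑ k, ‖M i k * Z k j‖ := norm_sum_le _ _
    _ ≤ ∑ _k : Fin m, C * ‖Z‖ := by
        refine Finset.sum_le_sum fun k _ => ?_
        rw [norm_mul]
        exact mul_le_mul ((Matrix.norm_entry_le_entrywise_sup_norm M).trans hM)
          (Matrix.norm_entry_le_entrywise_sup_norm Z) (norm_nonneg _) hC
    _ = (m : ℝ) * C * ‖Z‖ := by simp [mul_assoc]

/-- **Block upper triangular variational equation.**  If `A t` is block upper triangular
with diagonal blocks `A₁₁ t`, `A₂₂ t` and `Y` solves `Y' = A t * Y` on `[0, T]` with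
`Y 0 = 1`, then `Y t` stays block upper triangular (its lower-left block vanishes) and
its top-left block satisfies `Y₁₁' = A₁₁ t * Y₁₁` with `Y₁₁ 0 = 1`. -/
theorem block_triangular_variational_equation
    (n m : ℕ) (hn : 1 ≤ n) (hm : 1 ≤ m) (T : ℝ) (hT : 0 ≤ T)
    (A₁₁ : ℝ → Matrix (Fin n) (Fin n) ℝ) (hA₁₁ : Continuous A₁₁)
    (A₁₂ : ℝ → Matrix (Fin n) (Fin m) ℝ) (hA₁₂ : Continuous A₁₂)
    (A₂₂ : ℝ → Matrix (Fin m) (Fin m) ℝ) (hA₂₂ : Continuous A₂₂)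
    (A : ℝ → Matrix (Fin n ⊕ Fin m) (Fin n ⊕ Fin m) ℝ)
    (hA : A = fun t => Matrix.fromBlocks (A₁₁ t) (A₁₂ t) 0 (A₂₂ t))
    (Y : ℝ → Matrix (Fin n ⊕ Fin m) (Fin n ⊕ Fin m) ℝ)
    (hYdiff : Differentiable ℝ Y)
    (hYode : ∀ t ∈ Icc (0 : ℝ) T, HasDerivAt Y (A t * Y t) t)
    (hY0 : Y 0 = 1) :
    (∀ t ∈ Icc (0 : ℝ) T, (Y t).toBlocks₂₁ = 0) ∧
      (∀ t ∈ Icc (0 : ℝ) T,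
        HasDerivAt (fun s => (Y s).toBlocks₁₁) (A₁₁ t * (Y t).toBlocks₁₁) t) ∧
      (Y 0).toBlocks₁₁ = 1 := by
  -- block structure of the product
  have h21 : ∀ t, (A t * Y t).toBlocks₂₁ = A₂₂ t * (Y t).toBlocks₂₁ := by
    intro t
    conv_lhs => rw [hA, ← Matrix.fromBlocks_toBlocks (Y t)]
    simp [Matrix.fromBlocks_multiply]
  have h11 : ∀ t, (A t * Y t).toBlocks₁₁
      = A₁₁ t * (Y t).toBlocks₁₁ + A₁₂ t * (Y t).toBlocks₂₁ := by
    intro t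
    conv_lhs => rw [hA, ← Matrix.fromBlocks_toBlocks (Y t)]
    simp [Matrix.fromBlocks_multiply]
  set Z : ℝ → Matrix (Fin m) (Fin n) ℝ := fun s => (Y s).toBlocks₂₁ with hZ
  have hZderiv : ∀ t ∈ Icc (0 : ℝ) T, HasDerivAt Z (A₂₂ t * Z t) t := by
    intro t ht
    have h := ((toBlocks21L n m).hasFDerivAt).comp_hasDerivAt t (hYode t ht)
    exact h.congr_deriv (h21 t)
  -- Lipschitz bound for the vector field
  obtain ⟨C₀, hC₀⟩ := (isCompact_Icc (a := (0:ℝ)) (b := T)).exists_bound_of_continuousOn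
    hA₂₂.continuousOn
  set C : ℝ := max C₀ 0 with hC
  have hCnn : 0 ≤ C := le_max_right _ _
  set v : ℝ → Matrix (Fin m) (Fin n) ℝ → Matrix (Fin m) (Fin n) ℝ :=
    fun t W => A₂₂ (Set.projIcc 0 T hT t) * W with hv
  have hvlip : ∀ t, LipschitzWith (Real.toNNReal ((m : ℝ) * C)) (v t) := by
    intro t
    apply LipschitzWith.of_dist_le_mul
    intro x y
    rw [dist_eq_norm, dist_eq_norm, ← Matrix.mul_sub]
    have hb : ‖A₂₂ (Set.projIcc 0 T hT t)‖ ≤ C :=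
      le_trans (hC₀ _ (Set.projIcc 0 T hT t).2) (le_max_left _ _)
    calc ‖A₂₂ (Set.projIcc 0 T hT t) * (x - y)‖ ≤ (m : ℝ) * C * ‖x - y‖ :=
          norm_mul_le_card_mul n m _ _ hCnn hb
      _ ≤ (Real.toNNReal ((m : ℝ) * C) : ℝ) * ‖x - y‖ := by
          gcongr
          exact Real.le_coe_toNNReal _
  -- Z solves the ODE for v on [0, T]
  have hveq : ∀ t ∈ Icc (0 : ℝ) T, v t (Z t) = A₂₂ t * Z t := by
    intro t ht
    simp [hv, Set.projIcc_of_mem hT ht]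
  have hZ0 : Z 0 = 0 := by
    show (Y 0).toBlocks₂₁ = 0
    rw [hY0, ← Matrix.fromBlocks_one, Matrix.toBlocks_fromBlocks₂₁]
  have hZcont : ContinuousOn Z (Icc 0 T) :=
    (((toBlocks21L n m).continuous).comp hYdiff.continuous).continuousOn
  have huniq : EqOn Z (fun _ => (0 : Matrix (Fin m) (Fin n) ℝ)) (Icc 0 T) := by
    apply ODE_solution_unique (v := v) hvlip hZcont
    · intro t ht
      exact ((hZderiv t (Ico_subset_Icc_self ht)).congr_deriv
        (hveq t (Ico_subset_Icc_self ht)).symm).hasDerivWithinAt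
    · exact continuousOn_const
    · intro t ht
      simp [hv]
      exact (hasDerivWithinAt_const _ _ _)
    · simpa using hZ0
  have hZzero : ∀ t ∈ Icc (0 : ℝ) T, (Y t).toBlocks₂₁ = 0 := fun t ht => huniq ht
  refine ⟨hZzero, ?_, ?_⟩
  · intro t ht
    have h := ((toBlocks11L n m).hasFDerivAt).comp_hasDerivAt t (hYode t ht)
    have he : (toBlocks11L n m) (A t * Y t) = A₁₁ t * (Y t).toBlocks₁₁ := by
      show (A t * Y t).toBlocks₁₁ = _
      rw [h11 t, hZzero t ht, Matrix.mul_zero, add_zero]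
    exact h.congr_deriv he
  · rw [hY0, ← Matrix.fromBlocks_one, Matrix.toBlocks_fromBlocks₁₁]
end

section
/- Let n, m ≥ 1 and let A₁₁ : ℝ → Matrix n n ℝ, A₁₂ : ℝ → Matrix n m ℝ, A₂₂ : ℝ → Matrix m m ℝ be continuous, set A(t) = fromBlocks A₁₁(t) A₁₂(t) 0 A₂₂(t), and let Y : ℝ → Matrix (n+m) (n+m) ℝ be differentiable with Y'(t) = A(t) * Y(t) for t ∈ [0, T] and Y(0) = 1. Then the determinant of the top-left n × n block of Y(T) equals exp( ∫₀ᵀ trace ( A₁₁(t) ) dt ). -/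
open Set Matrix intervalIntegral

attribute [local instance] Matrix.normedAddCommGroup Matrix.normedSpace

namespace AffjordAux

/-- The determinant as a continuous multilinear map in the rows. -/
noncomputable def detCMM (n : ℕ) :
    ContinuousMultilinearMap ℝ (fun _ : Fin n => (Fin n → ℝ)) ℝ :=
  MultilinearMap.mkContinuous
    (Matrix.detRowAlternating : ((Fin n → ℝ) [⋀^Fin n]→ₗ[ℝ] ℝ)).toMultilinearMap
    (Fintype.card (Equiv.Perm (Fin n))) (by
      intro v
      have hv : (Matrix.detRowAlternating
          : ((Fin n → ℝ) [⋀^Fin n]→ₗ[ℝ] ℝ)).toMultilinearMap v = (Matrix.of v).det := rfl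
      rw [hv, Matrix.det_apply]
      refine (norm_sum_le _ _).trans ?_
      have hterm : ∀ σ : Equiv.Perm (Fin n),
          ‖Equiv.Perm.sign σ • ∏ i, Matrix.of v (σ i) i‖ ≤ ∏ i, ‖v i‖ := by
        intro σ
        have h1 : ‖Equiv.Perm.sign σ • ∏ i, Matrix.of v (σ i) i‖
            = ‖∏ i, v (σ i) i‖ := by
          rcases Int.units_eq_one_or (Equiv.Perm.sign σ) with h | h <;>
            simp [h, Units.smul_def, Matrix.of_apply]
        rw [h1]
        have h2 : ‖∏ i, v (σ i) i‖ ≤ ∏ i, ‖v (σ i)‖ := by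
          rw [Real.norm_eq_abs, Finset.abs_prod]
          exact Finset.prod_le_prod (fun i _ => abs_nonneg _)
            (fun i _ => norm_le_pi_norm (v (σ i)) i)
        refine h2.trans_eq ?_
        exact Equiv.prod_comp σ fun i => ‖v i‖
      refine (Finset.sum_le_card_nsmul _ _ _ fun σ _ => hterm σ).trans_eq ?_
      simp [Finset.card_univ, nsmul_eq_mul])

theorem detCMM_apply {n : ℕ} (v : Fin n → (Fin n → ℝ)) :
    detCMM n v = (Matrix.of v).det := rfl

/-- Derivative of the determinant along a matrix path. -/
theorem hasDerivAt_det {n : ℕ} {M : ℝ → Matrix (Fin n) (Fin n) ℝ}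
    {M' : Matrix (Fin n) (Fin n) ℝ} {t : ℝ} (h : HasDerivAt M M' t) :
    HasDerivAt (fun s => (M s).det)
      (∑ i, ((M t).updateRow i (M' i)).det) t := by
  classical
  have hrow : ∀ i : Fin n, HasDerivAt (fun s => M s i) (M' i) t := by
    intro i
    let L : Matrix (Fin n) (Fin n) ℝ →L[ℝ] (Fin n → ℝ) :=
      LinearMap.toContinuousLinearMap
        { toFun := fun N => N i, map_add' := fun _ _ => rfl, map_smul' := fun _ _ => rfl }
    have := L.hasFDerivAt.comp_hasDerivAt t h
    exact this
  have key := HasFDerivAt.multilinear_comp (detCMM n)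
      (g := fun i s => M s i)
      (g' := fun i => ContinuousLinearMap.smulRight (1 : ℝ →L[ℝ] ℝ) (M' i))
      (fun i => (hasDerivAt_iff_hasFDerivAt.mp (hrow i)))
  have key2 := key.hasDerivAt
  have hfun : (fun x => detCMM n (fun i => M x i)) = fun s => (M s).det := by
    funext s
    rw [detCMM_apply]
    rfl
  rw [hfun] at key2
  refine key2.congr_deriv ?_
  rw [ContinuousLinearMap.sum_apply]
  refine Finset.sum_congr rfl fun i _ => ?_
  have : ((detCMM n).toContinuousLinearMap (fun j => M t j) i).comp
      (ContinuousLinearMap.smulRight (1 : ℝ →L[ℝ] ℝ) (M' i)) 1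
      = detCMM n (Function.update (fun j => M t j) i (M' i)) := by
    simp [ContinuousMultilinearMap.toContinuousLinearMap]
  rw [this, detCMM_apply]
  rfl

end AffjordAux
section MainAux
variable (n m : ℕ)

noncomputable def blk11CLM :
    Matrix (Fin n ⊕ Fin m) (Fin n ⊕ Fin m) ℝ →L[ℝ] Matrix (Fin n) (Fin n) ℝ :=
  LinearMap.toContinuousLinearMap
    { toFun := Matrix.toBlocks₁₁, map_add' := fun _ _ => rfl, map_smul' := fun _ _ => rfl }

noncomputable def blk21CLM :
    Matrix (Fin n ⊕ Fin m) (Fin n ⊕ Fin m) ℝ →L[ℝ] Matrix (Fin m) (Fin n) ℝ :=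
  LinearMap.toContinuousLinearMap
    { toFun := Matrix.toBlocks₂₁, map_add' := fun _ _ => rfl, map_smul' := fun _ _ => rfl }

theorem blk11CLM_apply (M : Matrix (Fin n ⊕ Fin m) (Fin n ⊕ Fin m) ℝ) :
    blk11CLM n m M = M.toBlocks₁₁ := rfl

theorem blk21CLM_apply (M : Matrix (Fin n ⊕ Fin m) (Fin n ⊕ Fin m) ℝ) :
    blk21CLM n m M = M.toBlocks₂₁ := rfl

end MainAux


/-- **Jacobian determinant of the AFFJORD transformation.**  If `A t` is block upper
triangular with diagonal blocks `A₁₁ t`, `A₂₂ t` and `Y` solves `Y' = A t * Y` on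
`[0, T]` with `Y 0 = 1`, then the determinant of the top-left block of `Y T` equals
`exp (∫₀ᵀ trace (A₁₁ t) dt)`. -/
theorem affjord_jacobian_determinant
    (n m : ℕ) (hn : 1 ≤ n) (hm : 1 ≤ m) (T : ℝ) (hT : 0 ≤ T)
    (A₁₁ : ℝ → Matrix (Fin n) (Fin n) ℝ) (hA₁₁ : Continuous A₁₁)
    (A₁₂ : ℝ → Matrix (Fin n) (Fin m) ℝ) (hA₁₂ : Continuous A₁₂)
    (A₂₂ : ℝ → Matrix (Fin m) (Fin m) ℝ) (hA₂₂ : Continuous A₂₂)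
    (A : ℝ → Matrix (Fin n ⊕ Fin m) (Fin n ⊕ Fin m) ℝ)
    (hA : A = fun t => Matrix.fromBlocks (A₁₁ t) (A₁₂ t) 0 (A₂₂ t))
    (Y : ℝ → Matrix (Fin n ⊕ Fin m) (Fin n ⊕ Fin m) ℝ)
    (hYdiff : Differentiable ℝ Y)
    (hYode : ∀ t ∈ Icc (0 : ℝ) T, HasDerivAt Y (A t * Y t) t)
    (hY0 : Y 0 = 1) :
    ((Y T).toBlocks₁₁).det = Real.exp (∫ t in (0 : ℝ)..T, (A₁₁ t).trace) := by
  classical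
  subst hA
  set Y₁₁ : ℝ → Matrix (Fin n) (Fin n) ℝ := fun t => (Y t).toBlocks₁₁ with hY11def
  set Y₂₁ : ℝ → Matrix (Fin m) (Fin n) ℝ := fun t => (Y t).toBlocks₂₁ with hY21def
  -- blocks of the product
  have hmul21 : ∀ t : ℝ,
      (Matrix.fromBlocks (A₁₁ t) (A₁₂ t) 0 (A₂₂ t) * Y t).toBlocks₂₁ = A₂₂ t * Y₂₁ t := by
    intro t
    ext i j
    simp [Matrix.toBlocks₂₁, Matrix.mul_apply, Fintype.sum_sum_type, hY21def]
  have hmul11 : ∀ t : ℝ,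
      (Matrix.fromBlocks (A₁₁ t) (A₁₂ t) 0 (A₂₂ t) * Y t).toBlocks₁₁
        = A₁₁ t * Y₁₁ t + A₁₂ t * Y₂₁ t := by
    intro t
    ext i j
    simp [Matrix.toBlocks₁₁, Matrix.toBlocks₂₁, Matrix.mul_apply, Fintype.sum_sum_type,
      hY11def, hY21def, Matrix.add_apply]
  -- derivative of the 2,1 block
  have hder21 : ∀ t ∈ Icc (0 : ℝ) T, HasDerivAt Y₂₁ (A₂₂ t * Y₂₁ t) t := by
    intro t ht
    have h := (blk21CLM n m).hasFDerivAt.comp_hasDerivAt t (hYode t ht)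
    exact h.congr_deriv (hmul21 t)
  -- initial values
  have hY210 : Y₂₁ 0 = 0 := by
    ext i j
    simp [hY21def, hY0, Matrix.toBlocks₂₁, Matrix.one_apply]
  have hY110 : Y₁₁ 0 = 1 := by
    ext i j
    simp [hY11def, hY0, Matrix.toBlocks₁₁, Matrix.one_apply, Sum.inl.injEq]
  -- Gronwall: Y₂₁ vanishes on [0, T]
  obtain ⟨C, hC⟩ : ∃ C, ∀ t ∈ Icc (0 : ℝ) T, ‖A₂₂ t‖ ≤ C :=
    isCompact_Icc.exists_bound_of_continuousOn hA₂₂.continuousOn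
  set K : ℝ := (m : ℝ) * max C 0 with hKdef
  have hKnn : 0 ≤ K := mul_nonneg (Nat.cast_nonneg m) (le_max_right _ _)
  have hnormb : ∀ t ∈ Icc (0 : ℝ) T, ‖A₂₂ t * Y₂₁ t‖ ≤ K * ‖Y₂₁ t‖ := by
    intro t ht
    rw [Matrix.norm_le_iff (mul_nonneg hKnn (norm_nonneg _))]
    intro i j
    calc ‖(A₂₂ t * Y₂₁ t) i j‖ = |∑ k, A₂₂ t i k * Y₂₁ t k j| := by
          rw [Matrix.mul_apply, Real.norm_eq_abs]
      _ ≤ ∑ k, |A₂₂ t i k * Y₂₁ t k j| := Finset.abs_sum_le_sum_abs _ _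
      _ ≤ ∑ _k : Fin m, max C 0 * ‖Y₂₁ t‖ := by
          refine Finset.sum_le_sum fun k _ => ?_
          rw [abs_mul]
          refine mul_le_mul ?_ ?_ (abs_nonneg _) (le_max_right _ _)
          · exact (Matrix.norm_entry_le_entrywise_sup_norm _).trans
              ((hC t ht).trans (le_max_left _ _))
          · exact Matrix.norm_entry_le_entrywise_sup_norm (Y₂₁ t) (i := k) (j := j)
      _ = K * ‖Y₂₁ t‖ := by
          rw [Finset.sum_const, Finset.card_univ, Fintype.card_fin, nsmul_eq_mul, hKdef]
          ring
  have hzero : ∀ t ∈ Icc (0 : ℝ) T, Y₂₁ t = 0 := by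
    intro t ht
    have hcont : ContinuousOn Y₂₁ (Icc 0 T) :=
      ((blk21CLM n m).continuous.comp hYdiff.continuous).continuousOn
    have hb := norm_le_gronwallBound_of_norm_deriv_right_le
      (f' := fun t => A₂₂ t * Y₂₁ t) (δ := 0) (K := K) (ε := 0) hcont
      (fun x hx => (hder21 x (Ico_subset_Icc_self hx)).hasDerivWithinAt)
      (by simp [hY210])
      (fun x hx => by simpa using hnormb x (Ico_subset_Icc_self hx))
      t ht
    rw [gronwallBound_ε0_δ0] at hb
    simpa using norm_le_zero_iff.mp hb
  -- derivative of the 1,1 block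
  have hder11 : ∀ t ∈ Icc (0 : ℝ) T, HasDerivAt Y₁₁ (A₁₁ t * Y₁₁ t) t := by
    intro t ht
    have h := (blk11CLM n m).hasFDerivAt.comp_hasDerivAt t (hYode t ht)
    have h2 : (Matrix.fromBlocks (A₁₁ t) (A₁₂ t) 0 (A₂₂ t) * Y t).toBlocks₁₁
        = A₁₁ t * Y₁₁ t := by
      rw [hmul11 t, hzero t ht, Matrix.mul_zero, add_zero]
    exact h.congr_deriv h2
  -- determinant ODE
  set g : ℝ → ℝ := fun t => (Y₁₁ t).det with hgdef
  have hgder : ∀ t ∈ Icc (0 : ℝ) T, HasDerivAt g ((A₁₁ t).trace * g t) t := by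
    intro t ht
    have h := AffjordAux.hasDerivAt_det (hder11 t ht)
    have hsum : (∑ i, ((Y₁₁ t).updateRow i ((A₁₁ t * Y₁₁ t) i)).det)
        = (A₁₁ t).trace * g t := by
      have hrow : ∀ i : Fin n, (A₁₁ t * Y₁₁ t) i = ∑ k, (A₁₁ t i k) • (Y₁₁ t k) := by
        intro i
        funext j
        simp [Matrix.mul_apply, Finset.sum_apply]
      calc (∑ i, ((Y₁₁ t).updateRow i ((A₁₁ t * Y₁₁ t) i)).det)
          = ∑ i, (A₁₁ t i i) • (Y₁₁ t).det := by
            refine Finset.sum_congr rfl fun i _ => ?_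
            rw [hrow i, Matrix.det_updateRow_sum]
        _ = (A₁₁ t).trace * g t := by
            rw [Matrix.trace, hgdef]
            simp [Matrix.diag, smul_eq_mul, Finset.sum_mul]
    rw [hsum] at h
    exact h
  -- the integral of the trace
  have htrc : Continuous fun t => (A₁₁ t).trace := hA₁₁.matrix_trace
  set F : ℝ → ℝ := fun t => ∫ s in (0 : ℝ)..t, (A₁₁ s).trace with hFdef
  have hF : ∀ t : ℝ, HasDerivAt F ((A₁₁ t).trace) t := fun t =>
    (htrc.integral_hasStrictDerivAt 0 t).hasDerivAt
  -- the auxiliary constant function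
  set h : ℝ → ℝ := fun t => g t * Real.exp (-(F t)) with hhdef
  have hhder : ∀ t ∈ Icc (0 : ℝ) T, HasDerivAt h 0 t := by
    intro t ht
    have h1 := (hgder t ht).mul ((hF t).neg.exp)
    refine h1.congr_deriv ?_
    ring
  have hhcont : ContinuousOn h (Icc 0 T) := by
    have hgc : Continuous g := by
      have : Continuous Y₁₁ := (blk11CLM n m).continuous.comp hYdiff.continuous
      exact this.matrix_det
    have hFc : Continuous F :=
      continuous_iff_continuousAt.mpr fun t => (hF t).continuousAt
    exact (hgc.mul ((hFc.neg).rexp)).continuousOn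
  have hconst := constant_of_has_deriv_right_zero hhcont
    (fun x hx => (hhder x (Ico_subset_Icc_self hx)).hasDerivWithinAt)
    T (right_mem_Icc.mpr hT)
  have hF0 : F 0 = 0 := intervalIntegral.integral_same
  have hh0 : h 0 = 1 := by
    simp [hhdef, hgdef, hY110, hF0]
  rw [hh0] at hconst
  have hgT : g T = Real.exp (F T) := by
    have := hconst
    rw [hhdef] at this
    simp only [Real.exp_neg] at this
    field_simp at this
    linarith [this]
  exact hgT
end

section
/- Let n, p ≥ 1 and let f : ℝⁿ × ℝᵖ × ℝ → ℝⁿ be continuously differentiable. For each θ ∈ ℝᵖ let z(·; θ) : [0, T] → ℝⁿ solve z'(t) = f(z(t), θ, t) with fixed initial condition z(0; θ) = z₀, and assume θ ↦ z(t; θ) is continuously differentiable with derivative jointly continuous in (t, θ). For t ∈ [0, T] let Φ_{t,T} denote the map sending x ∈ ℝⁿ to the value at time T of the solution of y' = f(y, θ, s) with y(t) = x, assumed continuously differentiable in x with derivative jointly continuous in (t, x). Then D_θ z(T; θ) = ∫₀ᵀ D_x Φ_{t,T}(z(t; θ)) ∘ (D_θ f)(z(t; θ), θ, t) dt. -/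
open Set intervalIntegral Filter Topology

section AuxiliaryLemmas

variable {E P : Type*} [NormedAddCommGroup E] [NormedSpace ℝ E]
  [NormedAddCommGroup P] [NormedSpace ℝ P]
variable {E P : Type*} [NormedAddCommGroup E] [NormedSpace ℝ E]
  [NormedAddCommGroup P] [NormedSpace ℝ P]

/-- first-component injection -/
noncomputable def auxJx (E P : Type*) [NormedAddCommGroup E] [NormedSpace ℝ E]
  [NormedAddCommGroup P] [NormedSpace ℝ P] : E →L[ℝ] E × P × ℝ :=
  ContinuousLinearMap.inl ℝ E (P × ℝ)

noncomputable def auxJ (E P : Type*) [NormedAddCommGroup E] [NormedSpace ℝ E]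
  [NormedAddCommGroup P] [NormedSpace ℝ P] : P →L[ℝ] E × P × ℝ :=
  (ContinuousLinearMap.inr ℝ E (P × ℝ)).comp (ContinuousLinearMap.inl ℝ P ℝ)

lemma auxJx_norm_le : ‖auxJx E P‖ ≤ 1 := by
  refine ContinuousLinearMap.opNorm_le_bound _ zero_le_one fun x => ?_
  simp [auxJx, Prod.norm_def, ContinuousLinearMap.inl_apply, norm_nonneg]

lemma auxJ_norm_le : ‖auxJ E P‖ ≤ 1 := by
  refine ContinuousLinearMap.opNorm_le_bound _ zero_le_one fun x => ?_
  simp [auxJ, Prod.norm_def, norm_nonneg]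

lemma hasFDerivAt_x (f : E × P × ℝ → E) (hf : ContDiff ℝ 1 f) (x : E) (w : P) (c : ℝ) :
    HasFDerivAt (fun x' => f (x', w, c)) ((fderiv ℝ f (x, w, c)).comp (auxJx E P)) x := by
  have h0 : HasFDerivAt (fun x' : E => (x', (w, c)))
      ((ContinuousLinearMap.id ℝ E).prod (0 : E →L[ℝ] P × ℝ)) x :=
    (hasFDerivAt_id x).prodMk (hasFDerivAt_const _ x)
  have h1 : HasFDerivAt (fun x' : E => (x', w, c)) (auxJx E P) x := by
    convert h0 using 1
    exact ContinuousLinearMap.ext fun _ => rfl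
  exact ((hf.differentiable one_ne_zero) (x, w, c)).hasFDerivAt.comp x h1

lemma hasFDerivAt_w (f : E × P × ℝ → E) (hf : ContDiff ℝ 1 f) (x : E) (w : P) (c : ℝ) :
    HasFDerivAt (fun w' => f (x, w', c)) ((fderiv ℝ f (x, w, c)).comp (auxJ E P)) w := by
  have h0 : HasFDerivAt (fun w' : P => (x, (w', c)))
      ((0 : P →L[ℝ] E).prod ((ContinuousLinearMap.id ℝ P).prod (0 : P →L[ℝ] ℝ))) w :=
    (hasFDerivAt_const x w).prodMk ((hasFDerivAt_id w).prodMk (hasFDerivAt_const c w))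
  have h1 : HasFDerivAt (fun w' : P => (x, w', c)) (auxJ E P) w := by
    convert h0 using 1
    exact ContinuousLinearMap.ext fun _ => rfl
  exact ((hf.differentiable one_ne_zero) (x, w, c)).hasFDerivAt.comp w h1

/-- Uniform Lipschitz constant in the state variable on a ball, for times in `[0,T]`. -/
lemma aux_lipschitz [ProperSpace E] [ProperSpace P]
    (f : E × P × ℝ → E) (hf : ContDiff ℝ 1 f) (θ : P) (T R : ℝ) :
    ∃ K : NNReal, ∀ c ∈ Icc (0:ℝ) T, LipschitzOnWith K (fun x => f (x, θ, c))
      (Metric.closedBall (0:E) R) := by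
  have hC : IsCompact ((Metric.closedBall (0:E) R) ×ˢ ({θ} ×ˢ Icc (0:ℝ) T)) :=
    (isCompact_closedBall _ _).prod ((isCompact_singleton).prod isCompact_Icc)
  obtain ⟨M, hM⟩ := hC.exists_bound_of_continuousOn
    ((hf.continuous_fderiv one_ne_zero).continuousOn)
  refine ⟨(max M 0).toNNReal, fun c hc => ?_⟩
  have hconv : Convex ℝ (Metric.closedBall (0:E) R) := convex_closedBall _ _
  apply Convex.lipschitzOnWith_of_nnnorm_hasFDerivWithin_le
    (f' := fun x => (fderiv ℝ f (x, θ, c)).comp (auxJx E P)) ?_ ?_ hconv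
  · exact fun x hx => (hasFDerivAt_x f hf x θ c).hasFDerivWithinAt
  · intro x hx
    have h1 : ‖(fderiv ℝ f (x, θ, c)).comp (auxJx E P)‖ ≤ ‖fderiv ℝ f (x, θ, c)‖ * 1 := by
      refine le_trans (ContinuousLinearMap.opNorm_comp_le _ _) ?_
      exact mul_le_mul_of_nonneg_left auxJx_norm_le (norm_nonneg _)
    have h2 : ‖fderiv ℝ f (x, θ, c)‖ ≤ M := hM _ ⟨hx, rfl, hc⟩
    have : ‖(fderiv ℝ f (x, θ, c)).comp (auxJx E P)‖ ≤ max M 0 := by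
      rw [mul_one] at h1; exact le_trans h1 (le_trans h2 (le_max_left _ _))
    simpa [← norm_toNNReal] using Real.toNNReal_le_toNNReal this
variable {E P : Type*} [NormedAddCommGroup E] [NormedSpace ℝ E]
  [NormedAddCommGroup P] [NormedSpace ℝ P]

lemma flow_const [ProperSpace E] [ProperSpace P]
    (f : E × P × ℝ → E) (hf : ContDiff ℝ 1 f) (T : ℝ) (hT : 0 ≤ T) (θ : P)
    (Φ : ℝ → E → E)
    (hΦ : ∀ t ∈ Icc (0:ℝ) T, ∀ x, ∃ y : ℝ → E,
      y t = x ∧ (∀ s ∈ Icc (0:ℝ) T, HasDerivAt y (f (y s, θ, s)) s) ∧ Φ t x = y T)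
    (y : ℝ → E) (hy : ∀ s ∈ Icc (0:ℝ) T, HasDerivAt y (f (y s, θ, s)) s)
    (t : ℝ) (ht : t ∈ Icc (0:ℝ) T) : Φ t (y t) = y T := by
  obtain ⟨w, hwt, hwode, hwT⟩ := hΦ t ht (y t)
  -- bound both trajectories
  have hycont : ContinuousOn y (Icc 0 T) := fun s hs => ((hy s hs).continuousAt).continuousWithinAt
  have hwcont : ContinuousOn w (Icc 0 T) := fun s hs => ((hwode s hs).continuousAt).continuousWithinAt
  obtain ⟨R₁, hR₁⟩ := isCompact_Icc.exists_bound_of_continuousOn hycont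
  obtain ⟨R₂, hR₂⟩ := isCompact_Icc.exists_bound_of_continuousOn hwcont
  set R := max R₁ R₂ with hR
  obtain ⟨K, hK⟩ := aux_lipschitz f hf θ T R
  have hIcc : Icc t T ⊆ Icc (0:ℝ) T := Icc_subset_Icc ht.1 le_rfl
  have key : EqOn w y (Icc t T) := by
    apply ODE_solution_unique_of_mem_Icc_right
      (v := fun c x => f (x, θ, (projIcc (0:ℝ) T hT c : ℝ)))
      (s := fun _ => Metric.closedBall (0:E) R)
      (K := K)
      (fun c _ => hK _ (projIcc (0:ℝ) T hT c).2)
      (hwcont.mono hIcc) ?_ ?_ (hycont.mono hIcc) ?_ ?_ hwt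
    · intro s hs
      have hs' : s ∈ Icc (0:ℝ) T := hIcc (Ico_subset_Icc_self hs)
      have := (hwode s hs').hasDerivWithinAt (s := Ici s)
      show HasDerivWithinAt w (f (w s, θ, (projIcc (0:ℝ) T hT s : ℝ))) (Ici s) s
      rwa [projIcc_of_mem hT hs']
    · intro s hs
      have hs' : s ∈ Icc (0:ℝ) T := hIcc (Ico_subset_Icc_self hs)
      exact Metric.mem_closedBall.2 (by rw [dist_zero_right]; exact le_trans (hR₂ s hs') (le_max_right R₁ R₂))
    · intro s hs
      have hs' : s ∈ Icc (0:ℝ) T := hIcc (Ico_subset_Icc_self hs)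
      have := (hy s hs').hasDerivWithinAt (s := Ici s)
      show HasDerivWithinAt y (f (y s, θ, (projIcc (0:ℝ) T hT s : ℝ))) (Ici s) s
      rwa [projIcc_of_mem hT hs']
    · intro s hs
      have hs' : s ∈ Icc (0:ℝ) T := hIcc (Ico_subset_Icc_self hs)
      exact Metric.mem_closedBall.2 (by rw [dist_zero_right]; exact le_trans (hR₁ s hs') (le_max_left R₁ R₂))
  rw [hwT, key ⟨ht.2, le_rfl⟩]
lemma flow_comp_deriv [ProperSpace E] [ProperSpace P]
    (f : E × P × ℝ → E) (hf : ContDiff ℝ 1 f) (T : ℝ) (hT : 0 ≤ T) (θ : P)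
    (Φ : ℝ → E → E)
    (hΦ : ∀ t ∈ Icc (0:ℝ) T, ∀ x, ∃ y : ℝ → E,
      y t = x ∧ (∀ s ∈ Icc (0:ℝ) T, HasDerivAt y (f (y s, θ, s)) s) ∧ Φ t x = y T)
    (DΦ : ℝ → E → (E →L[ℝ] E))
    (hDΦ : ∀ t ∈ Icc (0:ℝ) T, ∀ x, HasFDerivAt (Φ t) (DΦ t x) x)
    (hDΦcont : Continuous fun q : ℝ × E => DΦ q.1 q.2)
    (θ' : P) (u : ℝ → E) (hu : ∀ s ∈ Icc (0:ℝ) T, HasDerivAt u (f (u s, θ', s)) s)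
    (t : ℝ) (ht : t ∈ Icc (0:ℝ) T) :
    HasDerivWithinAt (fun s => Φ s (u s))
      (DΦ t (u t) (f (u t, θ', t) - f (u t, θ, t))) (Icc (0:ℝ) T) t := by
  obtain ⟨w, hwt, hwode, hwT⟩ := hΦ t ht (u t)
  have hconst : ∀ s ∈ Icc (0:ℝ) T, Φ s (w s) = Φ t (u t) := by
    intro s hs
    rw [flow_const f hf T hT θ Φ hΦ w hwode s hs, hwT]
  set x := u t with hx
  set d := f (u t, θ', t) - f (u t, θ, t) with hd
  set M := ‖DΦ t x‖ with hM
  have hMpos : (0:ℝ) < M + 1 := by positivity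
  have hψd : HasDerivAt (fun s => u s - w s) d t := by
    have := (hu t ht).sub (hwode t ht)
    rwa [hwt, ← hx, ← hd] at this
  rw [hasDerivWithinAt_iff_isLittleO, Asymptotics.isLittleO_iff]
  intro c hc
  set c₁ := min 1 (c / (2 * (M + 1))) with hc₁
  have hc₁pos : 0 < c₁ := lt_min one_pos (by positivity)
  set ε₂ := c / (2 * (‖d‖ + 1)) with hε₂
  have hdpos : (0:ℝ) < ‖d‖ + 1 := by positivity
  have hε₂pos : 0 < ε₂ := by positivity
  -- δ from continuity of DΦ at (t, x)
  have hcont : ContinuousAt (fun q : ℝ × E => DΦ q.1 q.2) (t, x) := hDΦcont.continuousAt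
  rw [Metric.continuousAt_iff] at hcont
  obtain ⟨δ, hδpos, hδ⟩ := hcont ε₂ hε₂pos
  -- eventual facts
  have hu_t : Filter.Tendsto u (𝓝 t) (𝓝 x) := (hu t ht).continuousAt
  have hw_t : Filter.Tendsto w (𝓝 t) (𝓝 x) := by
    have h := (hwode t ht).continuousAt.tendsto
    rwa [hwt] at h
  have hev1 : ∀ᶠ s in 𝓝 t, dist (u s) x < δ := hu_t (Metric.ball_mem_nhds x hδpos)
  have hev2 : ∀ᶠ s in 𝓝 t, dist (w s) x < δ := hw_t (Metric.ball_mem_nhds x hδpos)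
  have hev3 : ∀ᶠ s in 𝓝 t, dist s t < δ := by
    filter_upwards [Metric.ball_mem_nhds t hδpos] with s hs
    exact hs
  have hev4 : ∀ᶠ s in 𝓝 t, ‖u s - w s - (u t - w t) - (s - t) • d‖ ≤ c₁ * ‖s - t‖ :=
    (hasDerivAt_iff_isLittleO.1 hψd).def hc₁pos
  filter_upwards [eventually_mem_nhdsWithin,
    ((hev1.and hev2).and (hev3.and hev4)).filter_mono nhdsWithin_le_nhds]
    with s hs hclose
  obtain ⟨⟨hus, hws⟩, hst, hψs⟩ := hclose
  rw [hwt] at hψs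
  simp only [hx, sub_self, sub_zero] at hψs
  -- mean value estimate
  have hball : ∀ v ∈ Metric.ball x δ, ‖DΦ s v - DΦ t x‖ ≤ ε₂ := by
    intro v hv
    have : dist ((s, v) : ℝ × E) (t, x) < δ := by
      rw [Prod.dist_eq]
      exact max_lt hst hv
    have := hδ this
    rw [dist_eq_norm] at this
    exact this.le
  have MV : ‖(Φ s (u s) - DΦ t x (u s)) - (Φ s (w s) - DΦ t x (w s))‖
      ≤ ε₂ * ‖u s - w s‖ := by
    have := (convex_ball x δ).norm_image_sub_le_of_norm_hasFDerivWithin_le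
      (f := fun v => Φ s v - DΦ t x v) (f' := fun v => (DΦ s v) - DΦ t x)
      (fun v hv => (((hDΦ s hs v).sub ((DΦ t x).hasFDerivAt)).hasFDerivWithinAt))
      hball (Metric.mem_ball.mpr hws) (Metric.mem_ball.mpr hus)
    exact this
  -- ψ bound
  have hψbound : ‖u s - w s‖ ≤ (‖d‖ + 1) * |s - t| := by
    have h1 : ‖u s - w s‖ ≤ ‖u s - w s - (s - t) • d‖ + ‖(s - t) • d‖ := by
      have := norm_add_le (u s - w s - (s - t) • d) ((s - t) • d)
      simpa using this
    have h2 : ‖(s - t) • d‖ = |s - t| * ‖d‖ := by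
      rw [norm_smul, Real.norm_eq_abs]
    have h3 : c₁ ≤ 1 := min_le_left _ _
    calc ‖u s - w s‖ ≤ c₁ * ‖s - t‖ + |s - t| * ‖d‖ := by rw [h2] at h1; linarith [hψs]
      _ ≤ 1 * |s - t| + |s - t| * ‖d‖ := by
          rw [Real.norm_eq_abs]
          have := abs_nonneg (s - t)
          nlinarith
      _ = (‖d‖ + 1) * |s - t| := by ring
  -- algebraic identity
  have hgt : Φ t (u t) = Φ s (w s) := (hconst s hs).symm
  have hid : Φ s (u s) - Φ t (u t) - (s - t) • (DΦ t x d)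
      = ((Φ s (u s) - DΦ t x (u s)) - (Φ s (w s) - DΦ t x (w s)))
        + DΦ t x (u s - w s - (s - t) • d) := by
    have e : (DΦ t x) (u s - w s - (s - t) • d)
        = (DΦ t x) (u s) - (DΦ t x) (w s) - (s - t) • ((DΦ t x) d) := by
      rw [map_sub, map_sub, map_smul]
    rw [hgt, e]
    abel
  rw [hid]
  have hb1 : ‖DΦ t x (u s - w s - (s - t) • d)‖ ≤ M * (c₁ * ‖s - t‖) := by
    refine le_trans ((DΦ t x).le_opNorm _) ?_
    exact mul_le_mul_of_nonneg_left hψs (norm_nonneg _)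
  have hMc₁ : M * c₁ ≤ c / 2 := by
    have h1 : c₁ ≤ c / (2 * (M + 1)) := min_le_right _ _
    have hM0 : (0:ℝ) ≤ M := norm_nonneg _
    have h2 : M * c₁ ≤ M * (c / (2 * (M + 1))) := mul_le_mul_of_nonneg_left h1 hM0
    have h3 : M * (c / (2 * (M + 1))) ≤ c / 2 := by
      have e : M * (c / (2 * (M + 1))) = M * c / (2 * (M + 1)) := by ring
      rw [e, div_le_div_iff₀ (by positivity) (by norm_num : (0:ℝ) < 2)]
      nlinarith [hc.le]
    linarith
  have hε₂d : ε₂ * (‖d‖ + 1) = c / 2 := by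
    rw [hε₂]
    field_simp
  calc ‖((Φ s (u s) - DΦ t x (u s)) - (Φ s (w s) - DΦ t x (w s)))
        + DΦ t x (u s - w s - (s - t) • d)‖
      ≤ ε₂ * ‖u s - w s‖ + M * (c₁ * ‖s - t‖) := le_trans (norm_add_le _ _) (by linarith)
    _ ≤ ε₂ * ((‖d‖ + 1) * |s - t|) + (c / 2) * ‖s - t‖ := by
        have := mul_le_mul_of_nonneg_left hψbound hε₂pos.le
        have h4 : M * (c₁ * ‖s - t‖) ≤ (c / 2) * ‖s - t‖ := by
          rw [← mul_assoc]
          exact mul_le_mul_of_nonneg_right hMc₁ (norm_nonneg _)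
        linarith
    _ = c * ‖s - t‖ := by
        rw [Real.norm_eq_abs, ← mul_assoc, hε₂d]
        ring
end AuxiliaryLemmas

lemma num_delta {K d : ℝ} (hK : 0 ≤ K) (hd : 0 < d) :
    0 < min 1 (d / (K + 2)) ∧ min 1 (d / (K + 2)) ≤ 1 ∧ min 1 (d / (K + 2)) < d ∧
      K * min 1 (d / (K + 2)) < d := by
  have h2 : (0:ℝ) < K + 2 := by linarith
  have hq : 0 < d / (K + 2) := by positivity
  refine ⟨lt_min one_pos hq, min_le_left _ _, ?_, ?_⟩
  · have h1 : min 1 (d / (K + 2)) ≤ d / (K + 2) := min_le_right _ _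
    have h3 : d / (K + 2) < d := by
      rw [div_lt_iff₀ h2]; nlinarith
    linarith
  · have h1 : min 1 (d / (K + 2)) ≤ d / (K + 2) := min_le_right _ _
    have h2' : K * min 1 (d / (K + 2)) ≤ K * (d / (K + 2)) :=
      mul_le_mul_of_nonneg_left h1 hK
    have h3 : K * (d / (K + 2)) < d := by
      rw [← mul_div_assoc, div_lt_iff₀ h2]; nlinarith
    linarith

lemma num_e3 {e M : ℝ} (he : 0 < e) (hM : 0 ≤ M) : (e / (2 * (M + 1))) * M ≤ e / 2 := by
  rw [div_mul_eq_mul_div, div_le_div_iff₀ (by positivity) (by norm_num : (0:ℝ) < 2)]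
  nlinarith

lemma num_e4 {e M : ℝ} (he : 0 < e) (hM : 0 ≤ M) : M * (2 * (e / (4 * (M + 1)))) ≤ e / 2 := by
  have e5 : M * (2 * (e / (4 * (M + 1)))) = (M * 2 * e) / (4 * (M + 1)) := by ring
  rw [e5, div_le_div_iff₀ (by positivity) (by norm_num : (0:ℝ) < 2)]
  nlinarith

lemma num_combine {a b e2 Mf MP e1 e N : ℝ} (t1 : a ≤ e2 * (Mf * N))
    (t2 : b ≤ MP * (2 * e1 * N)) (e3 : e2 * Mf ≤ e / 2) (e4 : MP * (2 * e1) ≤ e / 2)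
    (hN : 0 ≤ N) (hab : 0 ≤ a + b → True) : a + b ≤ e * N := by
  nlinarith

lemma num_final {c T N v : ℝ} (hc : 0 < c) (hT : 0 ≤ T) (hN : 0 ≤ N)
    (hv : v ≤ (c / (T + 1)) * N * T) : v ≤ c * N := by
  have h1 : (c / (T + 1)) * N * T = (c * N * T) / (T + 1) := by ring
  have h2 : (c * N * T) / (T + 1) ≤ c * N := by
    rw [div_le_iff₀ (by linarith : (0:ℝ) < T + 1)]
    nlinarith
  linarith

lemma num_zmem {a b K θ R₀ K₁ : ℝ} (h1 : a ≤ K₁ * θ) (h2 : θ ≤ 1)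
    (h3 : b ≤ K + a) (h4 : K ≤ R₀) (hK₁ : 0 ≤ K₁) : b ≤ R₀ + K₁ + 1 := by
  nlinarith

set_option maxHeartbeats 1000000 in
/-- **Parameter sensitivity of the terminal state (constant parameters).**  For the ODE
`z' (t) = f (z t, θ, t)` with fixed initial condition `z 0 = z₀`, the derivative of the
terminal state with respect to constant parameters `θ` is
`D_θ z(T; θ) = ∫₀ᵀ D_x Φ_{t,T} (z t) ∘ (D_θ f)(z t, θ, t) dt`, where `Φ_{t,T}` is the
time-`t`-to-time-`T` solution map. -/
theorem terminal_state_parameter_sensitivity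
    (n p : ℕ) (hn : 1 ≤ n) (hp : 1 ≤ p) (T : ℝ) (hT : 0 ≤ T)
    (f : (Fin n → ℝ) × (Fin p → ℝ) × ℝ → (Fin n → ℝ)) (hf : ContDiff ℝ 1 f)
    (z₀ : Fin n → ℝ) (z : (Fin p → ℝ) → ℝ → (Fin n → ℝ))
    (hz0 : ∀ θ', z θ' 0 = z₀)
    (hzode : ∀ θ', ∀ t ∈ Icc (0 : ℝ) T,
      HasDerivAt (z θ') (f (z θ' t, θ', t)) t)
    (Dz : ℝ → (Fin p → ℝ) → ((Fin p → ℝ) →L[ℝ] (Fin n → ℝ)))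
    (hDz : ∀ t ∈ Icc (0 : ℝ) T, ∀ θ', HasFDerivAt (fun θ'' => z θ'' t) (Dz t θ') θ')
    (hDzcont : Continuous fun s : ℝ × (Fin p → ℝ) => Dz s.1 s.2)
    (θ : Fin p → ℝ)
    (Φ : ℝ → (Fin n → ℝ) → (Fin n → ℝ))
    (hΦ : ∀ t ∈ Icc (0 : ℝ) T, ∀ x, ∃ y : ℝ → (Fin n → ℝ),
      y t = x ∧ (∀ s ∈ Icc (0 : ℝ) T, HasDerivAt y (f (y s, θ, s)) s) ∧
        Φ t x = y T)
    (DΦ : ℝ → (Fin n → ℝ) → ((Fin n → ℝ) →L[ℝ] (Fin n → ℝ)))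
    (hDΦ : ∀ t ∈ Icc (0 : ℝ) T, ∀ x, HasFDerivAt (Φ t) (DΦ t x) x)
    (hDΦcont : Continuous fun s : ℝ × (Fin n → ℝ) => DΦ s.1 s.2) :
    Dz T θ = ∫ t in (0 : ℝ)..T,
      (DΦ t (z θ t)).comp (fderiv ℝ (fun w => f (z θ t, w, t)) θ) := by
  classical
  have hTmem : T ∈ Icc (0:ℝ) T := ⟨hT, le_rfl⟩
  have hzcont : ∀ θ', ContinuousOn (z θ') (Icc (0:ℝ) T) :=
    fun θ' s hs => ((hzode θ' s hs).continuousAt).continuousWithinAt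
  have hΦT : ∀ x, Φ T x = x := by
    intro x
    obtain ⟨y, hyT, -, hΦTx⟩ := hΦ T hTmem x
    rw [hΦTx, hyT]
  -- the integrand family
  set G : (Fin p → ℝ) → ℝ → (Fin n → ℝ) :=
    fun θ' t => DΦ t (z θ' t) (f (z θ' t, θ', t) - f (z θ' t, θ, t)) with hG
  have hGcont : ∀ θ', ContinuousOn (G θ') (Icc (0:ℝ) T) := by
    intro θ'
    have h1 : ContinuousOn (fun t : ℝ => (t, z θ' t)) (Icc (0:ℝ) T) :=
      continuousOn_id.prodMk (hzcont θ')
    have h2 : ContinuousOn (fun t : ℝ => DΦ t (z θ' t)) (Icc (0:ℝ) T) :=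
      hDΦcont.comp_continuousOn h1
    have hmap1 : ContinuousOn (fun t : ℝ => ((z θ' t, θ', t) : (Fin n → ℝ) × (Fin p → ℝ) × ℝ))
        (Icc (0:ℝ) T) := (hzcont θ').prodMk (continuousOn_const.prodMk continuousOn_id)
    have hmap2 : ContinuousOn (fun t : ℝ => ((z θ' t, θ, t) : (Fin n → ℝ) × (Fin p → ℝ) × ℝ))
        (Icc (0:ℝ) T) := (hzcont θ').prodMk (continuousOn_const.prodMk continuousOn_id)
    have h3 : ContinuousOn (fun t : ℝ => f (z θ' t, θ', t) - f (z θ' t, θ, t))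
        (Icc (0:ℝ) T) :=
      (hf.continuous.comp_continuousOn hmap1).sub (hf.continuous.comp_continuousOn hmap2)
    exact h2.clm_apply h3
  have hGint : ∀ θ', IntervalIntegrable (G θ') MeasureTheory.volume 0 T := by
    intro θ'
    apply ContinuousOn.intervalIntegrable
    rw [uIcc_of_le hT]
    exact hGcont θ'
  -- the fundamental identity (★)
  have star : ∀ θ', ∫ t in (0:ℝ)..T, G θ' t = z θ' T - Φ 0 z₀ := by
    intro θ'
    have hg : ∀ t ∈ Icc (0:ℝ) T,
        HasDerivWithinAt (fun s => Φ s (z θ' s)) (G θ' t) (Icc (0:ℝ) T) t :=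
      fun t ht => flow_comp_deriv f hf T hT θ Φ hΦ DΦ hDΦ hDΦcont θ' (z θ') (hzode θ') t ht
    have hFTC := intervalIntegral.integral_eq_sub_of_hasDeriv_right_of_le hT
      (fun t ht => (hg t ht).continuousWithinAt)
      (fun t htO => (hg t (Ioo_subset_Icc_self htO)).mono_of_mem_nhdsWithin
        (Icc_mem_nhdsGT_of_mem ⟨htO.1.le, htO.2⟩))
      (hGint θ')
    rw [hFTC, hΦT (z θ' T), hz0 θ']
  have hGθ : ∀ t, G θ t = 0 := by
    intro t
    simp [hG]
  have hzT : z θ T = Φ 0 z₀ := by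
    have h := star θ
    simp only [hGθ] at h
    rw [intervalIntegral.integral_zero] at h
    exact (sub_eq_zero.mp h.symm)
  -- Step C
  set J := auxJ (Fin n → ℝ) (Fin p → ℝ) with hJdef
  set Df₂ : (Fin n → ℝ) × (Fin p → ℝ) × ℝ → ((Fin p → ℝ) →L[ℝ] (Fin n → ℝ)) :=
    fun q => (fderiv ℝ f q).comp J with hDf₂
  have hDf₂cont : Continuous Df₂ :=
    (hf.continuous_fderiv one_ne_zero).clm_comp continuous_const
  set A : ℝ → ((Fin p → ℝ) →L[ℝ] (Fin n → ℝ)) := fun t => Df₂ (z θ t, θ, t) with hA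
  set PP : ℝ → ((Fin p → ℝ) →L[ℝ] (Fin n → ℝ)) := fun t => (DΦ t (z θ t)).comp (A t) with hPP
  have hPPcont : ContinuousOn PP (Icc (0:ℝ) T) := by
    have h2 : ContinuousOn (fun t : ℝ => DΦ t (z θ t)) (Icc (0:ℝ) T) :=
      hDΦcont.comp_continuousOn (continuousOn_id.prodMk (hzcont θ))
    have h3 : ContinuousOn A (Icc (0:ℝ) T) :=
      hDf₂cont.comp_continuousOn ((hzcont θ).prodMk (continuousOn_const.prodMk continuousOn_id))
    exact h2.clm_comp h3
  have hPPint : IntervalIntegrable PP MeasureTheory.volume 0 T := by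
    apply ContinuousOn.intervalIntegrable
    rw [uIcc_of_le hT]
    exact hPPcont
  obtain ⟨L, hL⟩ : ∃ L' : (Fin p → ℝ) →L[ℝ] (Fin n → ℝ),
      L' = ∫ t in (0:ℝ)..T, PP t := ⟨_, rfl⟩
  suffices hmain : HasFDerivAt (fun θ' => z θ' T) L θ by
    have h1 : Dz T θ = L := (hDz T hTmem θ).unique hmain
    rw [h1, hL]
    apply intervalIntegral.integral_congr
    intro t _
    show PP t = (DΦ t (z θ t)).comp (fderiv ℝ (fun w => f (z θ t, w, t)) θ)
    rw [(hasFDerivAt_w f hf (z θ t) θ t).fderiv]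
  -- bounds
  obtain ⟨K₀, hK₀⟩ := (isCompact_Icc.prod (isCompact_closedBall θ 1)).exists_bound_of_continuousOn
    hDzcont.continuousOn
  set K₁ := max K₀ 0 with hK₁
  have hK₁0 : (0:ℝ) ≤ K₁ := le_max_right _ _
  have hzlip : ∀ t ∈ Icc (0:ℝ) T, ∀ θ' ∈ Metric.closedBall θ 1,
      ‖z θ' t - z θ t‖ ≤ K₁ * ‖θ' - θ‖ := by
    intro t ht θ' hθ'
    exact (convex_closedBall θ 1).norm_image_sub_le_of_norm_hasFDerivWithin_le
      (fun ξ hξ => (hDz t ht ξ).hasFDerivWithinAt)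
      (fun ξ hξ => le_trans (hK₀ (t, ξ) ⟨ht, hξ⟩) (le_max_left _ _))
      (Metric.mem_closedBall_self zero_le_one) hθ'
  obtain ⟨R₀, hR₀⟩ := isCompact_Icc.exists_bound_of_continuousOn (hzcont θ)
  set R := R₀ + K₁ + 1 with hR
  have hzmem : ∀ t ∈ Icc (0:ℝ) T, ∀ θ' ∈ Metric.closedBall θ 1,
      z θ' t ∈ Metric.closedBall (0 : Fin n → ℝ) R := by
    intro t ht θ' hθ'
    rw [Metric.mem_closedBall, dist_zero_right]
    have h1 := hzlip t ht θ' hθ'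
    have h2 : ‖θ' - θ‖ ≤ 1 := by
      rw [← dist_eq_norm]
      exact Metric.mem_closedBall.mp hθ'
    have h3 : ‖z θ' t‖ ≤ ‖z θ t‖ + ‖z θ' t - z θ t‖ := by
      have h4 := norm_add_le (z θ t) (z θ' t - z θ t)
      simpa using h4
    have h5 := hR₀ t ht
    exact num_zmem h1 h2 h3 h5 hK₁0
  have hzmemθ : ∀ t ∈ Icc (0:ℝ) T, z θ t ∈ Metric.closedBall (0 : Fin n → ℝ) R :=
    fun t ht => hzmem t ht θ (Metric.mem_closedBall_self zero_le_one)
  set C₁ := Icc (0:ℝ) T ×ˢ Metric.closedBall (0 : Fin n → ℝ) R with hC₁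
  set C₂ := Metric.closedBall (0 : Fin n → ℝ) R ×ˢ
    (Metric.closedBall θ 1 ×ˢ Icc (0:ℝ) T) with hC₂
  have hC₁c : IsCompact C₁ := isCompact_Icc.prod (isCompact_closedBall _ _)
  have hC₂c : IsCompact C₂ :=
    (isCompact_closedBall _ _).prod ((isCompact_closedBall _ _).prod isCompact_Icc)
  obtain ⟨MΦ₀, hMΦ₀⟩ := hC₁c.exists_bound_of_continuousOn hDΦcont.continuousOn
  set MΦ := max MΦ₀ 0 with hMΦ
  have hMΦ0 : (0:ℝ) ≤ MΦ := le_max_right _ _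
  have hMΦb : ∀ q ∈ C₁, ‖DΦ q.1 q.2‖ ≤ MΦ := fun q hq => le_trans (hMΦ₀ q hq) (le_max_left _ _)
  obtain ⟨Mf₀, hMf₀⟩ := hC₂c.exists_bound_of_continuousOn hDf₂cont.continuousOn
  set Mf := max Mf₀ 0 with hMf
  have hMf0 : (0:ℝ) ≤ Mf := le_max_right _ _
  have hMfb : ∀ q ∈ C₂, ‖Df₂ q‖ ≤ Mf := fun q hq => le_trans (hMf₀ q hq) (le_max_left _ _)
  have hUC1 := Metric.uniformContinuousOn_iff.mp
    (hC₁c.uniformContinuousOn_of_continuous hDΦcont.continuousOn)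
  have hUC2 := Metric.uniformContinuousOn_iff.mp
    (hC₂c.uniformContinuousOn_of_continuous hDf₂cont.continuousOn)
  rw [hasFDerivAt_iff_isLittleO, Asymptotics.isLittleO_iff]
  intro c hc
  set ε := c / (T + 1) with hε
  have hεpos : 0 < ε := by positivity
  set ε₁ := ε / (4 * (MΦ + 1)) with hε₁
  have hε₁pos : 0 < ε₁ := by positivity
  set ε₂ := ε / (2 * (Mf + 1)) with hε₂
  have hε₂pos : 0 < ε₂ := by positivity
  obtain ⟨δ₂, hδ₂pos, hδ₂⟩ := hUC1 ε₂ hε₂pos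
  obtain ⟨δ₁, hδ₁pos, hδ₁⟩ := hUC2 ε₁ hε₁pos
  set δm := min δ₁ δ₂ with hδm
  have hδmpos : 0 < δm := lt_min hδ₁pos hδ₂pos
  set δ := min 1 (δm / (K₁ + 2)) with hδ
  obtain ⟨hδpos, hδ1, hδlt, hKδ⟩ := num_delta hK₁0 hδmpos
  have hδmδ₁ : δm ≤ δ₁ := min_le_left _ _
  have hδmδ₂ : δm ≤ δ₂ := min_le_right _ _
  -- pointwise estimate
  have hptw : ∀ θ' ∈ Metric.closedBall θ δ, ∀ t ∈ Icc (0:ℝ) T,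
      ‖G θ' t - PP t (θ' - θ)‖ ≤ ε * ‖θ' - θ‖ := by
    intro θ' hθ' t ht
    have hθ'1 : θ' ∈ Metric.closedBall θ 1 :=
      Metric.closedBall_subset_closedBall hδ1 hθ'
    have hnθ : ‖θ' - θ‖ ≤ δ := by
      rw [← dist_eq_norm]
      exact Metric.mem_closedBall.mp hθ'
    have hx'mem := hzmem t ht θ' hθ'1
    have hxmem := hzmemθ t ht
    have hxx' : ‖z θ' t - z θ t‖ ≤ K₁ * δ :=
      le_trans (hzlip t ht θ' hθ'1) (mul_le_mul_of_nonneg_left hnθ hK₁0)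
    have hΔ : ‖f (z θ' t, θ', t) - f (z θ' t, θ, t)‖ ≤ Mf * ‖θ' - θ‖ := by
      exact (convex_closedBall θ 1).norm_image_sub_le_of_norm_hasFDerivWithin_le
        (f' := fun w => Df₂ (z θ' t, w, t))
        (fun w hw => (hasFDerivAt_w f hf (z θ' t) w t).hasFDerivWithinAt)
        (fun w hw => hMfb _ ⟨hx'mem, hw, ht⟩)
        (Metric.mem_closedBall_self zero_le_one) hθ'1
    have hb2 : ‖DΦ t (z θ' t) - DΦ t (z θ t)‖ ≤ ε₂ := by
      have hd : dist ((t, z θ' t) : ℝ × (Fin n → ℝ)) (t, z θ t) < δ₂ := by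
        rw [Prod.dist_eq]
        apply max_lt (by simpa using hδ₂pos)
        rw [dist_eq_norm]
        exact lt_of_le_of_lt hxx' (lt_of_lt_of_le hKδ hδmδ₂)
      have h7 := hδ₂ (t, z θ' t) ⟨ht, hx'mem⟩ (t, z θ t) ⟨ht, hxmem⟩ hd
      rw [dist_eq_norm] at h7
      exact h7.le
    have hbnd : ∀ w ∈ Metric.closedBall θ δ,
        ‖Df₂ (z θ' t, w, t) - Df₂ (z θ' t, θ, t)‖ ≤ ε₁ := by
      intro w hw
      have hw1 : w ∈ Metric.closedBall θ 1 :=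
        Metric.closedBall_subset_closedBall hδ1 hw
      have hd : dist ((z θ' t, w, t) : (Fin n → ℝ) × (Fin p → ℝ) × ℝ)
          (z θ' t, θ, t) < δ₁ := by
        rw [Prod.dist_eq, Prod.dist_eq]
        apply max_lt (by simpa using hδ₁pos)
        apply max_lt
        · exact lt_of_le_of_lt (Metric.mem_closedBall.mp hw)
            (lt_of_lt_of_le hδlt hδmδ₁)
        · simpa using hδ₁pos
      have h8 := hδ₁ (z θ' t, w, t) ⟨hx'mem, hw1, ht⟩ (z θ' t, θ, t)
        ⟨hx'mem, Metric.mem_closedBall_self zero_le_one, ht⟩ hd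
      rw [dist_eq_norm] at h8
      exact h8.le
    have hb3 : ‖f (z θ' t, θ', t) - f (z θ' t, θ, t) - Df₂ (z θ' t, θ, t) (θ' - θ)‖
        ≤ ε₁ * ‖θ' - θ‖ := by
      have hmv := (convex_closedBall θ δ).norm_image_sub_le_of_norm_hasFDerivWithin_le
        (f := fun w => f (z θ' t, w, t) - Df₂ (z θ' t, θ, t) w) (C := ε₁)
        (f' := fun w => Df₂ (z θ' t, w, t) - Df₂ (z θ' t, θ, t))
        (fun w hw => ((hasFDerivAt_w f hf (z θ' t) w t).sub
          ((Df₂ (z θ' t, θ, t)).hasFDerivAt)).hasFDerivWithinAt)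
        hbnd (Metric.mem_closedBall_self hδpos.le) hθ'
      have e : f (z θ' t, θ', t) - Df₂ (z θ' t, θ, t) θ'
          - (f (z θ' t, θ, t) - Df₂ (z θ' t, θ, t) θ)
          = f (z θ' t, θ', t) - f (z θ' t, θ, t) - Df₂ (z θ' t, θ, t) (θ' - θ) := by
        simp only [map_sub]
        abel
      rw [e] at hmv
      exact hmv
    have hb4 : ‖Df₂ (z θ' t, θ, t) - A t‖ ≤ ε₁ := by
      have hd : dist ((z θ' t, θ, t) : (Fin n → ℝ) × (Fin p → ℝ) × ℝ)
          (z θ t, θ, t) < δ₁ := by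
        rw [Prod.dist_eq, Prod.dist_eq]
        apply max_lt
        · rw [dist_eq_norm]
          exact lt_of_le_of_lt hxx' (lt_of_lt_of_le hKδ hδmδ₁)
        · apply max_lt (by simpa using hδ₁pos) (by simpa using hδ₁pos)
      have h9 := hδ₁ (z θ' t, θ, t) ⟨hx'mem, Metric.mem_closedBall_self zero_le_one, ht⟩
        (z θ t, θ, t) ⟨hxmem, Metric.mem_closedBall_self zero_le_one, ht⟩ hd
      rw [dist_eq_norm] at h9
      exact h9.le
    have hid : G θ' t - PP t (θ' - θ)
        = (DΦ t (z θ' t) - DΦ t (z θ t)) (f (z θ' t, θ', t) - f (z θ' t, θ, t))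
          + (DΦ t (z θ t)) ((f (z θ' t, θ', t) - f (z θ' t, θ, t)) - A t (θ' - θ)) := by
      show DΦ t (z θ' t) (f (z θ' t, θ', t) - f (z θ' t, θ, t))
          - (DΦ t (z θ t)).comp (A t) (θ' - θ) = _
      simp only [ContinuousLinearMap.sub_apply, ContinuousLinearMap.comp_apply, map_sub]
      abel
    rw [hid]
    have t1 : ‖(DΦ t (z θ' t) - DΦ t (z θ t)) (f (z θ' t, θ', t) - f (z θ' t, θ, t))‖
        ≤ ε₂ * (Mf * ‖θ' - θ‖) := by
      refine le_trans ((DΦ t (z θ' t) - DΦ t (z θ t)).le_opNorm _) ?_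
      exact mul_le_mul hb2 hΔ (norm_nonneg _) hε₂pos.le
    have t2 : ‖(DΦ t (z θ t)) ((f (z θ' t, θ', t) - f (z θ' t, θ, t)) - A t (θ' - θ))‖
        ≤ MΦ * (2 * ε₁ * ‖θ' - θ‖) := by
      have h5 : ‖(f (z θ' t, θ', t) - f (z θ' t, θ, t)) - A t (θ' - θ)‖
          ≤ 2 * ε₁ * ‖θ' - θ‖ := by
        have e2 : (f (z θ' t, θ', t) - f (z θ' t, θ, t)) - A t (θ' - θ)
            = ((f (z θ' t, θ', t) - f (z θ' t, θ, t)) - Df₂ (z θ' t, θ, t) (θ' - θ))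
              + (Df₂ (z θ' t, θ, t) - A t) (θ' - θ) := by
          rw [ContinuousLinearMap.sub_apply]
          abel
        rw [e2]
        refine le_trans (norm_add_le _ _) ?_
        have h6 : ‖(Df₂ (z θ' t, θ, t) - A t) (θ' - θ)‖ ≤ ε₁ * ‖θ' - θ‖ :=
          le_trans ((Df₂ (z θ' t, θ, t) - A t).le_opNorm _)
            (mul_le_mul_of_nonneg_right hb4 (norm_nonneg _))
        linarith [hb3]
      refine le_trans ((DΦ t (z θ t)).le_opNorm _) ?_
      exact mul_le_mul (hMΦb (t, z θ t) ⟨ht, hxmem⟩) h5 (norm_nonneg _) hMΦ0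
    refine le_trans (norm_add_le _ _) ?_
    have e3 : ε₂ * Mf ≤ ε / 2 := num_e3 hεpos hMf0
    have e4 : MΦ * (2 * ε₁) ≤ ε / 2 := num_e4 hεpos hMΦ0
    exact num_combine t1 t2 e3 e4 (norm_nonneg (θ' - θ)) (fun _ => trivial)
  -- conclude
  filter_upwards [Metric.closedBall_mem_nhds θ hδpos] with θ' hθ'
  have hdiff : z θ' T - z θ T = ∫ t in (0:ℝ)..T, G θ' t := by
    rw [star θ', hzT]
  have happL : L (θ' - θ) = ∫ t in (0:ℝ)..T, PP t (θ' - θ) := by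
    rw [hL]
    exact ContinuousLinearMap.intervalIntegral_apply hPPint _
  have hPPv_int : IntervalIntegrable (fun t => PP t (θ' - θ)) MeasureTheory.volume 0 T := by
    apply ContinuousOn.intervalIntegrable
    rw [uIcc_of_le hT]
    exact hPPcont.clm_apply continuousOn_const
  have hsub : z θ' T - z θ T - L (θ' - θ)
      = ∫ t in (0:ℝ)..T, (G θ' t - PP t (θ' - θ)) := by
    rw [hdiff, happL, ← intervalIntegral.integral_sub (hGint θ') hPPv_int]
  rw [hsub]
  have hboundarg : ∀ t ∈ Set.uIoc (0:ℝ) T, ‖G θ' t - PP t (θ' - θ)‖ ≤ ε * ‖θ' - θ‖ := by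
    intro t htI
    rw [uIoc_of_le hT] at htI
    exact hptw θ' hθ' t ⟨htI.1.le, htI.2⟩
  have hbound := intervalIntegral.norm_integral_le_of_norm_le_const hboundarg
  refine le_trans hbound ?_
  rw [sub_zero, abs_of_nonneg hT]
  exact num_final hc hT (norm_nonneg (θ' - θ)) (le_of_eq (by rw [hε]))
end
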